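/- arXiv:2604.19511 — 6 statements merged into one kernel-verified Lean document; each statement's English description precedes it below -/
import Mathlib

section
/- Let F act on (ε1∧ε2)^{⊗n} by the signed sum of odd operators sending ε1∧ε2 ↦ ε1∧ε0 ↦ ε1∧ε2̄ ↦ 0, with sign conventions making applications at distinct positions anticommute. Then F^{2k}((ε1∧ε2)^{⊗n}) = k! · Σ_{1≤i1<⋯<ik≤n} (⊗_{t=1}^{n} w_t), where w_t = ε1∧ε2̄ if t ∈ {i1,…,ik} and w_t = ε1∧ε2 otherwise. -/
open Finsupp

/-- Koszul sign. -/
noncomputable def koszulSign {ι : Type*} (par : ι → ZMod 2) {n : ℕ}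
    (x : Fin n → ι) (p : Fin n) : ℂ :=
  (-1 : ℂ) ^ (∑ i ∈ Finset.Iio p, (par (x i)).val)

/-- Signed action of an operator `f` on the `p`-th factor of a tensor power. -/
noncomputable def signedFactorAction {ι : Type*} [DecidableEq ι]
    (par : ι → ZMod 2) (f : ι → (ι →₀ ℂ)) {n : ℕ} (p : Fin n) :
    ((Fin n → ι) →₀ ℂ) →ₗ[ℂ] ((Fin n → ι) →₀ ℂ) :=
  Finsupp.lsum ℂ fun x => LinearMap.toSpanSingleton ℂ _
    (koszulSign par x p •
      (f (x p)).sum fun j c => Finsupp.single (Function.update x p j) c)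

/-- Parities of the basis `u0 = ε1∧ε2` (even), `u1 = ε1∧ε0` (odd), `u2 = ε1∧ε2̄` (even)
of the 3-dimensional superspace `U`. -/
def par3 : Fin 3 → ZMod 2 := ![0, 1, 0]

/-- The odd operator `f2` on `U`: `u0 ↦ u1 ↦ u2 ↦ 0`. -/
noncomputable def fmap : Fin 3 → (Fin 3 →₀ ℂ) :=
  ![Finsupp.single 1 1, Finsupp.single 2 1, 0]

lemma sfa_single {ι : Type*} [DecidableEq ι] (par : ι → ZMod 2) (f : ι → (ι →₀ ℂ)) {n : ℕ}
    (p : Fin n) (x : Fin n → ι) :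
    signedFactorAction par f p (Finsupp.single x 1) =
      koszulSign par x p •
        (f (x p)).sum fun j c => Finsupp.single (Function.update x p j) c := by
  simp [signedFactorAction]

lemma fmap0 : fmap 0 = Finsupp.single 1 1 := rfl
lemma fmap1 : fmap 1 = Finsupp.single 2 1 := rfl
lemma fmap2 : fmap 2 = 0 := rfl

lemma koszul_update_ge {n : ℕ} {ι : Type*} (par : ι → ZMod 2) (x : Fin n → ι) {p q : Fin n}
    (h : p ≤ q) (j : ι) : koszulSign par (Function.update x q j) p = koszulSign par x p := by
  unfold koszulSign
  congr 1
  refine Finset.sum_congr rfl fun i hi => ?_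
  rw [Function.update_of_ne]
  exact ne_of_lt (lt_of_lt_of_le (Finset.mem_Iio.mp hi) h)

lemma neg_one_pow_self_mul (a : ℕ) : (-1 : ℂ)^a * (-1)^a = 1 := by
  rw [← pow_add]; exact Even.neg_one_pow ⟨a, rfl⟩

lemma koszul_update_lt {n : ℕ} {ι : Type*} (par : ι → ZMod 2) (x : Fin n → ι) {p q : Fin n}
    (h : q < p) (j : ι) :
    koszulSign par (Function.update x q j) p =
      (-1 : ℂ)^((par j).val) * (-1)^((par (x q)).val) * koszulSign par x p := by
  unfold koszulSign
  have hq : q ∈ Finset.Iio p := Finset.mem_Iio.mpr h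
  rw [← Finset.sum_erase_add _ _ hq, ← Finset.sum_erase_add _ (fun i => (par (x i)).val) hq]
  have hA : ∑ i ∈ (Finset.Iio p).erase q, (par (Function.update x q j i)).val
      = ∑ i ∈ (Finset.Iio p).erase q, (par (x i)).val := by
    refine Finset.sum_congr rfl fun i hi => ?_
    rw [Function.update_of_ne (Finset.ne_of_mem_erase hi)]
  rw [hA, Function.update_self, pow_add, pow_add]
  have h1 := neg_one_pow_self_mul ((par (x q)).val)
  set A := ∑ i ∈ (Finset.Iio p).erase q, (par (x i)).val
  have h2 : (-1:ℂ)^((par j).val) * (-1)^((par (x q)).val) * ((-1)^A * (-1)^((par (x q)).val))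
      = ((-1:ℂ)^((par (x q)).val) * (-1)^((par (x q)).val)) * ((-1)^A * (-1)^((par j).val)) := by
    ring
  rw [h2, h1, one_mul]

noncomputable abbrev Ap {n : ℕ} (p : Fin n) := signedFactorAction par3 fmap p

lemma Ap_single0 {n : ℕ} (p : Fin n) (x : Fin n → Fin 3) (h : x p = 0) :
    Ap p (Finsupp.single x 1) =
      koszulSign par3 x p • Finsupp.single (Function.update x p 1) 1 := by
  rw [sfa_single, h, fmap0, Finsupp.sum_single_index (by simp)]

lemma Ap_single1 {n : ℕ} (p : Fin n) (x : Fin n → Fin 3) (h : x p = 1) :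
    Ap p (Finsupp.single x 1) =
      koszulSign par3 x p • Finsupp.single (Function.update x p 2) 1 := by
  rw [sfa_single, h, fmap1, Finsupp.sum_single_index (by simp)]

lemma Ap_single2 {n : ℕ} (p : Fin n) (x : Fin n → Fin 3) (h : x p = 2) :
    Ap p (Finsupp.single x 1) = 0 := by
  rw [sfa_single, h, fmap2]
  simp

lemma fin3_cases (a : Fin 3) : a = 0 ∨ a = 1 ∨ a = 2 := by fin_cases a <;> simp

lemma Ap_single_ne2 {n : ℕ} (p : Fin n) (x : Fin n → Fin 3) (h : x p ≠ 2) :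
    Ap p (Finsupp.single x 1) =
      koszulSign par3 x p • Finsupp.single (Function.update x p (x p + 1)) 1 := by
  rcases fin3_cases (x p) with h0 | h0 | h0
  · rw [Ap_single0 p x h0, h0]; rfl
  · rw [Ap_single1 p x h0, h0]; rfl
  · exact absurd h0 h

lemma flip_sign (a : Fin 3) (h : a ≠ 2) :
    (-1:ℂ)^((par3 (a+1)).val) * (-1)^((par3 a).val) = -1 := by
  fin_cases a
  · simp [par3]; norm_num [show ZMod.val (1 : ZMod 2) = 1 from rfl]
  · simp [par3]; norm_num [show ZMod.val (1 : ZMod 2) = 1 from rfl]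
  · exact absurd rfl h

lemma anticomm_single {n : ℕ} {p q : Fin n} (hpq : p < q) (x : Fin n → Fin 3) :
    Ap p (Ap q (Finsupp.single x 1)) + Ap q (Ap p (Finsupp.single x 1)) = 0 := by
  have hne : p ≠ q := hpq.ne
  rcases eq_or_ne (x q) 2 with hq2 | hq2
  · rw [Ap_single2 q x hq2, map_zero, zero_add]
    rcases eq_or_ne (x p) 2 with hp2 | hp2
    · rw [Ap_single2 p x hp2, map_zero]
    · rw [Ap_single_ne2 p x hp2, map_smul,
        Ap_single2 q _ (by rw [Function.update_of_ne hne.symm]; exact hq2), smul_zero]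
  · rcases eq_or_ne (x p) 2 with hp2 | hp2
    · rw [Ap_single2 p x hp2, map_zero, add_zero, Ap_single_ne2 q x hq2, map_smul,
        Ap_single2 p _ (by rw [Function.update_of_ne hne]; exact hp2), smul_zero]
    · rw [Ap_single_ne2 q x hq2, map_smul,
        Ap_single_ne2 p _ (by rw [Function.update_of_ne hne]; exact hp2),
        Ap_single_ne2 p x hp2, map_smul,
        Ap_single_ne2 q _ (by rw [Function.update_of_ne hne.symm]; exact hq2)]
      rw [Function.update_of_ne hne, Function.update_of_ne hne.symm]
      rw [koszul_update_ge par3 x hpq.le, koszul_update_lt par3 x hpq]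
      rw [Function.update_comm hne]
      rw [smul_smul, smul_smul, ← add_smul]
      rw [flip_sign (x p) hp2]
      ring_nf
      simp

noncomputable def hmap : Fin 3 → (Fin 3 →₀ ℂ) := ![Finsupp.single 2 1, 0, 0]

noncomputable abbrev Hp {n : ℕ} (p : Fin n) := signedFactorAction (fun _ => (0 : ZMod 2)) hmap p

lemma koszul_triv {ι : Type*} {n : ℕ} (x : Fin n → ι) (p : Fin n) :
    koszulSign (fun _ => (0 : ZMod 2)) x p = 1 := by
  unfold koszulSign
  norm_num [show ZMod.val (0 : ZMod 2) = 0 from rfl]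

lemma Hp_single0 {n : ℕ} (p : Fin n) (x : Fin n → Fin 3) (h : x p = 0) :
    Hp p (Finsupp.single x 1) = Finsupp.single (Function.update x p 2) 1 := by
  rw [sfa_single, h, koszul_triv, one_smul, show hmap 0 = Finsupp.single 2 1 from rfl,
    Finsupp.sum_single_index (by simp)]

lemma Hp_single_ne0 {n : ℕ} (p : Fin n) (x : Fin n → Fin 3) (h : x p ≠ 0) :
    Hp p (Finsupp.single x 1) = 0 := by
  rw [sfa_single]
  rcases fin3_cases (x p) with h0 | h0 | h0
  · exact absurd h0 h
  · rw [h0, show hmap 1 = 0 from rfl]; simp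
  · rw [h0, show hmap 2 = 0 from rfl]; simp

lemma koszul_mul_self {ι : Type*} {n : ℕ} (par : ι → ZMod 2) (x : Fin n → ι) (p : Fin n) :
    koszulSign par x p * koszulSign par x p = 1 := neg_one_pow_self_mul _

lemma diag_single {n : ℕ} (p : Fin n) (x : Fin n → Fin 3) :
    Ap p (Ap p (Finsupp.single x 1)) = Hp p (Finsupp.single x 1) := by
  rcases fin3_cases (x p) with h0 | h0 | h0
  · rw [Ap_single0 p x h0, map_smul,
      Ap_single1 p _ (Function.update_self p 1 x),
      koszul_update_ge par3 x le_rfl,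
      Function.update_idem, Hp_single0 p x h0, smul_smul, koszul_mul_self, one_smul]
  · rw [Ap_single1 p x h0, map_smul,
      Ap_single2 p _ (Function.update_self p 2 x), smul_zero,
      Hp_single_ne0 p x (by rw [h0]; decide)]
  · rw [Ap_single2 p x h0, map_zero, Hp_single_ne0 p x (by rw [h0]; decide)]

lemma single_eq_smul {n : ℕ} (x : Fin n → Fin 3) (b : ℂ) :
    Finsupp.single x b = b • Finsupp.single x 1 := by
  rw [Finsupp.smul_single', mul_one]

lemma anticomm_map {n : ℕ} {p q : Fin n} (hpq : p ≠ q) :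
    (Ap p ∘ₗ Ap q) + (Ap q ∘ₗ Ap p) = 0 := by
  apply Finsupp.lhom_ext
  intro x b
  rw [single_eq_smul]
  simp only [map_smul, LinearMap.add_apply, LinearMap.comp_apply, LinearMap.zero_apply,
    ← smul_add]
  rcases hpq.lt_or_gt with h | h
  · rw [anticomm_single h x, smul_zero]
  · rw [add_comm, anticomm_single h x, smul_zero]

lemma F_sq {n : ℕ} :
    (∑ p : Fin n, Ap p) * (∑ p : Fin n, Ap p) = ∑ p : Fin n, Hp p := by
  rw [Finset.sum_mul_sum]
  have : ∀ p : Fin n, Ap p * Ap p = Hp p := by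
    intro p
    apply Finsupp.lhom_ext
    intro x b
    rw [single_eq_smul, map_smul, map_smul, Module.End.mul_apply]
    rw [diag_single]
  calc ∑ p : Fin n, ∑ q : Fin n, Ap p * Ap q
      = ∑ z ∈ (Finset.univ ×ˢ Finset.univ : Finset (Fin n × Fin n)), Ap z.1 * Ap z.2 := by
        rw [Finset.sum_product]
    _ = ∑ z ∈ Finset.univ.diag ∪ Finset.univ.offDiag, Ap z.1 * Ap z.2 := by
        rw [Finset.diag_union_offDiag]
    _ = ∑ p : Fin n, Hp p := by
        have hoff : ∑ z ∈ (Finset.univ : Finset (Fin n)).offDiag, Ap z.1 * Ap z.2 = 0 := by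
          apply Finset.sum_involution (fun z _ => (z.2, z.1))
          · intro z hz
            have hne : z.1 ≠ z.2 := (Finset.mem_offDiag.mp hz).2.2
            have := anticomm_map (n := n) hne
            have h2 : (Ap z.1 ∘ₗ Ap z.2) + (Ap z.2 ∘ₗ Ap z.1) = 0 := this
            exact h2
          · intro z hz h
            have hne : z.1 ≠ z.2 := (Finset.mem_offDiag.mp hz).2.2
            simp [Prod.ext_iff]
            intro h1; exact absurd h1.symm hne
          · intro z hz
            have hz' := Finset.mem_offDiag.mp hz
            exact Finset.mem_offDiag.mpr ⟨Finset.mem_univ _, Finset.mem_univ _, hz'.2.2.symm⟩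
          · intro z hz; rfl
        rw [Finset.sum_union (Finset.disjoint_diag_offDiag _), hoff, add_zero,
          Finset.sum_diag]
        exact Finset.sum_congr rfl fun p _ => this p

def chi {n : ℕ} (s : Finset (Fin n)) : Fin n → Fin 3 :=
  fun t => if t ∈ s then 2 else 0

lemma reindex {n k : ℕ} {M : Type*} [AddCommMonoid M] (g : Finset (Fin n) → M) :
    ∑ s ∈ Finset.powersetCard k (Finset.univ : Finset (Fin n)), ∑ p ∈ sᶜ, g (insert p s)
      = (k + 1) • ∑ t ∈ Finset.powersetCard (k+1) (Finset.univ : Finset (Fin n)), g t := by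
  rw [Finset.sum_sigma']
  have : ∀ t ∈ Finset.powersetCard (k+1) (Finset.univ : Finset (Fin n)),
      (k + 1) • g t = ∑ p ∈ t, g t := by
    intro t ht
    rw [Finset.sum_const, Finset.mem_powersetCard_univ.mp ht]
  rw [Finset.smul_sum, Finset.sum_congr rfl this, Finset.sum_sigma']
  refine Finset.sum_bij' (fun z hz => ⟨insert z.2 z.1, z.2⟩)
    (fun z hz => ⟨z.1.erase z.2, z.2⟩) ?_ ?_ ?_ ?_ ?_
  · rintro ⟨s, p⟩ hz
    rw [Finset.mem_sigma] at hz ⊢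
    obtain ⟨hs, hp⟩ := hz
    rw [Finset.mem_powersetCard_univ] at hs ⊢
    exact ⟨by rw [Finset.card_insert_of_notMem (Finset.mem_compl.mp hp), hs],
      Finset.mem_insert_self _ _⟩
  · rintro ⟨t, p⟩ hz
    rw [Finset.mem_sigma] at hz ⊢
    obtain ⟨ht, hp⟩ := hz
    rw [Finset.mem_powersetCard_univ] at ht ⊢
    exact ⟨by rw [Finset.card_erase_of_mem hp, ht]; rfl,
      Finset.mem_compl.mpr (Finset.notMem_erase _ _)⟩
  · rintro ⟨s, p⟩ hz
    rw [Finset.mem_sigma] at hz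
    exact Sigma.ext (by simp [Finset.erase_insert (Finset.mem_compl.mp hz.2)]) (by simp)
  · rintro ⟨t, p⟩ hz
    rw [Finset.mem_sigma] at hz
    exact Sigma.ext (by simp [Finset.insert_erase hz.2]) (by simp)
  · rintro ⟨s, p⟩ hz
    rfl

lemma update_chi {n : ℕ} (s : Finset (Fin n)) (p : Fin n) (hp : p ∉ s) :
    Function.update (chi s) p 2 = chi (insert p s) := by
  funext t
  rcases eq_or_ne t p with rfl | h
  · rw [Function.update_self]
    simp [chi]
  · rw [Function.update_of_ne h]
    simp only [chi, Finset.mem_insert]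
    rcases eq_or_ne t p with rfl | h2
    · exact absurd rfl h
    · simp [h2]

lemma G_step {n k : ℕ} :
    (∑ p : Fin n, Hp p) (∑ s ∈ Finset.powersetCard k (Finset.univ : Finset (Fin n)),
        Finsupp.single (chi s) 1)
      = (k + 1) • ∑ t ∈ Finset.powersetCard (k+1) (Finset.univ : Finset (Fin n)),
          Finsupp.single (chi t) (1 : ℂ) := by
  rw [map_sum, ← reindex]
  refine Finset.sum_congr rfl fun s hs => ?_
  rw [LinearMap.sum_apply]
  rw [← Finset.sum_subset (Finset.subset_univ sᶜ) (by
    intro p _ hp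
    rw [Finset.mem_compl, not_not] at hp
    exact Hp_single_ne0 p _ (by simp [chi, hp]))]
  refine Finset.sum_congr rfl fun p hp => ?_
  rw [Finset.mem_compl] at hp
  rw [Hp_single0 p _ (by simp [chi, hp]), update_chi s p hp]

lemma G_pow {n : ℕ} (k : ℕ) :
    ((∑ p : Fin n, Hp p) ^ k) (Finsupp.single (fun _ => (0 : Fin 3)) 1)
      = (k.factorial : ℂ) •
          ∑ s ∈ Finset.powersetCard k (Finset.univ : Finset (Fin n)),
            Finsupp.single (chi s) (1 : ℂ) := by
  induction k with
  | zero =>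
    rw [pow_zero, Nat.factorial_zero, Nat.cast_one, one_smul, Finset.powersetCard_zero,
      Finset.sum_singleton, Module.End.one_apply]
    congr 1
  | succ k ih =>
    rw [pow_succ', Module.End.mul_apply, ih, map_smul, G_step,
      ← Nat.cast_smul_eq_nsmul ℂ, smul_smul]
    congr 1
    push_cast [Nat.factorial_succ]
    ring


/-- Lemma 5.3(i): with `F = Σ_p f2^{(p)}` on `U^{⊗n}`,
`F^{2k}((ε1∧ε2)^{⊗n}) = k! · Σ_{1≤i1<⋯<ik≤n} ⊗_t w_t`, where `w_t = ε1∧ε2̄` for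
`t ∈ {i1,…,ik}` and `w_t = ε1∧ε2` otherwise. -/
theorem F_even_pow_apply (n k : ℕ) :
    ((∑ p : Fin n, signedFactorAction par3 fmap p) ^ (2 * k))
        (Finsupp.single (fun _ => (0 : Fin 3)) 1)
      = (k.factorial : ℂ) •
          ∑ s ∈ Finset.powersetCard k (Finset.univ : Finset (Fin n)),
            Finsupp.single (fun t => if t ∈ s then (2 : Fin 3) else 0) (1 : ℂ) := by
  rw [pow_mul, pow_two, F_sq, G_pow]
  rfl
end

section
/- With the setup of the previous lemma, for odd powers: F^{2k+1}((ε1∧ε2)^{⊗n}) = k! · Σ_{1≤i1<⋯<ik≤n} Σ_{j ∉ {i1,…,ik}} (⊗_{t=1}^n w_t), where w_t = ε1∧ε2̄ if t ∈ {i1,…,ik}, w_t = ε1∧ε0 if t = j, and w_t = ε1∧ε2 otherwise. -/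
open Finsupp

/-! Every vector `F^{2k}((ε1∧ε2)^{⊗n})` is a combination of even basis tensors `v_s`, with `ε1∧ε2̄`
in the slots `s` and `ε1∧ε2` elsewhere. Since `v_s` is even, `F v_s = Σ_{j ∉ s} w_{s,j}` carries no
signs. Applying `F` once more, raising the odd slot `j` gives `v_{s ∪ {j}}`, while creating a second
odd slot `p` gives a tensor with odd slots `{j, p}` whose Koszul sign depends on the order of
`j` and `p`, so these terms cancel in pairs. Hence `F² v_s = Σ_{j ∉ s} v_{s ∪ {j}}`, and as every
`(k+1)`-set arises from `k + 1` of the `k`-sets, `F^{2k} v_∅ = k! Σ_{|s| = k} v_s`. -/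

theorem Finset.sum_sum_erase_eq_zero_of_antisymm {ι M : Type*} [DecidableEq ι] [AddCommMonoid M]
    (s : Finset ι) (g : ι → ι → M) (hg : ∀ i j, i ≠ j → g i j + g j i = 0) :
    ∑ i ∈ s, ∑ j ∈ s.erase i, g i j = 0 := by
  rw [Finset.sum_sigma']
  refine Finset.sum_involution (fun x _ => ⟨x.2, x.1⟩) ?_ ?_ ?_ ?_
  · rintro ⟨i, j⟩ hx
    exact hg i j (Finset.ne_of_mem_erase (Finset.mem_sigma.mp hx).2).symm
  · rintro ⟨i, j⟩ hx - h
    exact Finset.ne_of_mem_erase (Finset.mem_sigma.mp hx).2 (congrArg Sigma.fst h)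
  · rintro ⟨i, j⟩ hx
    obtain ⟨hi, hj⟩ := Finset.mem_sigma.mp hx
    exact Finset.mem_sigma.mpr
      ⟨Finset.mem_of_mem_erase hj, Finset.mem_erase.mpr ⟨(Finset.ne_of_mem_erase hj).symm, hi⟩⟩
  · intro _ _
    rfl

theorem Finset.sum_powersetCard_sum_compl_insert {α M : Type*} [Fintype α] [DecidableEq α]
    [AddCommMonoid M] (φ : Finset α → M) (k : ℕ) :
    ∑ s ∈ Finset.powersetCard k Finset.univ, ∑ j ∈ sᶜ, φ (insert j s)
      = (k + 1) • ∑ t ∈ Finset.powersetCard (k + 1) Finset.univ, φ t := by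
  have hcard : ∀ t ∈ Finset.powersetCard (k + 1) (Finset.univ : Finset α),
      (k + 1) • φ t = ∑ _j ∈ t, φ t := by
    intro t ht
    rw [Finset.sum_const, (Finset.mem_powersetCard.mp ht).2]
  rw [Finset.smul_sum, Finset.sum_congr rfl hcard, Finset.sum_sigma', Finset.sum_sigma']
  refine Finset.sum_nbij' (fun x => ⟨insert x.2 x.1, x.2⟩) (fun x => ⟨x.1.erase x.2, x.2⟩)
    ?_ ?_ ?_ ?_ (fun _ _ => rfl)
  · rintro ⟨s, j⟩ h
    simp only [Finset.mem_sigma, Finset.mem_powersetCard_univ, Finset.mem_compl] at h ⊢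
    exact ⟨by rw [Finset.card_insert_of_notMem h.2, h.1], Finset.mem_insert_self _ _⟩
  · rintro ⟨t, j⟩ h
    simp only [Finset.mem_sigma, Finset.mem_powersetCard_univ, Finset.mem_compl] at h ⊢
    exact ⟨by rw [Finset.card_erase_of_mem h.2, h.1, Nat.add_sub_cancel], Finset.notMem_erase _ _⟩
  · rintro ⟨s, j⟩ h
    simp only [Finset.mem_sigma, Finset.mem_compl] at h
    simp [Finset.erase_insert h.2]
  · rintro ⟨t, j⟩ h
    simp [Finset.insert_erase (Finset.mem_sigma.mp h).2]

section SignedFactorAction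

variable {ι : Type*} {par : ι → ZMod 2} {n : ℕ} {x : Fin n → ι} {p : Fin n}

theorem koszulSign_eq_one (hx : ∀ i, par (x i) = 0) : koszulSign par x p = 1 := by
  simp [koszulSign, hx]

theorem koszulSign_eq_ite {j : Fin n} (hj : par (x j) = 1) (hx : ∀ i ≠ j, par (x i) = 0) :
    koszulSign par x p = if j < p then -1 else 1 := by
  have hval : ∀ i, (par (x i)).val = if i = j then 1 else 0 := by
    intro i
    rcases eq_or_ne i j with rfl | hij
    · rw [hj, if_pos rfl]
      rfl
    · rw [hx i hij, if_neg hij, ZMod.val_zero]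
  rw [koszulSign, Finset.sum_congr rfl fun i _ => hval i, Finset.sum_ite_eq' _ j]
  simp only [Finset.mem_Iio]
  split_ifs <;> simp

variable [DecidableEq ι] {f : ι → (ι →₀ ℂ)}

theorem signedFactorAction_single_of_eq_single {i : ι} {a : ℂ}
    (h : f (x p) = Finsupp.single i a) :
    signedFactorAction par f p (Finsupp.single x 1)
      = koszulSign par x p • Finsupp.single (Function.update x p i) a := by
  rw [signedFactorAction, Finsupp.lsum_single, LinearMap.toSpanSingleton_apply, one_smul, h,
    Finsupp.sum_single_index (Finsupp.single_zero _)]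

theorem signedFactorAction_single_of_eq_zero (h : f (x p) = 0) :
    signedFactorAction par f p (Finsupp.single x 1) = 0 := by
  rw [signedFactorAction, Finsupp.lsum_single, LinearMap.toSpanSingleton_apply, one_smul, h,
    Finsupp.sum_zero_index, smul_zero]

end SignedFactorAction

noncomputable def opF (n : ℕ) : Module.End ℂ ((Fin n → Fin 3) →₀ ℂ) :=
  ∑ p : Fin n, signedFactorAction par3 fmap p

def evenWord {n : ℕ} (s : Finset (Fin n)) : Fin n → Fin 3 :=
  fun t => if t ∈ s then 2 else 0

def oddWord {n : ℕ} (s : Finset (Fin n)) (j : Fin n) : Fin n → Fin 3 :=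
  fun t => if t ∈ s then 2 else if t = j then 1 else 0

def oddPairWord {n : ℕ} (s : Finset (Fin n)) (i j : Fin n) : Fin n → Fin 3 :=
  fun t => if t ∈ s then 2 else if t = i ∨ t = j then 1 else 0

section Words

variable {n : ℕ} (s : Finset (Fin n))

theorem evenWord_empty : evenWord (∅ : Finset (Fin n)) = fun _ => 0 := by
  funext t
  simp [evenWord]

theorem oddPairWord_comm (i j : Fin n) : oddPairWord s i j = oddPairWord s j i := by
  funext t
  simp only [oddPairWord, or_comm]

variable {s}

theorem update_evenWord {j : Fin n} (hj : j ∉ s) :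
    Function.update (evenWord s) j 1 = oddWord s j := by
  funext t
  rcases eq_or_ne t j with rfl | ht
  · simp [oddWord, hj]
  · simp [evenWord, oddWord, ht]

theorem update_oddWord_self (j : Fin n) :
    Function.update (oddWord s j) j 2 = evenWord (insert j s) := by
  funext t
  rcases eq_or_ne t j with rfl | ht
  · simp [evenWord]
  · simp [evenWord, oddWord, ht]

theorem update_oddWord {j p : Fin n} (hp : p ∉ s) :
    Function.update (oddWord s j) p 1 = oddPairWord s j p := by
  funext t
  rcases eq_or_ne t p with rfl | ht
  · simp [oddPairWord, hp]
  · by_cases hts : t ∈ s <;> simp [oddWord, oddPairWord, hts, ht]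

theorem koszulSign_evenWord (p : Fin n) : koszulSign par3 (evenWord s) p = 1 :=
  koszulSign_eq_one fun t => by by_cases h : t ∈ s <;> simp [evenWord, par3, h]

theorem koszulSign_oddWord {j : Fin n} (hj : j ∉ s) (p : Fin n) :
    koszulSign par3 (oddWord s j) p = if j < p then -1 else 1 :=
  koszulSign_eq_ite (by simp [oddWord, par3, hj])
    fun t ht => by by_cases h : t ∈ s <;> simp [oddWord, par3, h, ht]

end Words

section ActionOfF

variable {n : ℕ} {s : Finset (Fin n)}

theorem opF_single_evenWord (s : Finset (Fin n)) :
    opF n (Finsupp.single (evenWord s) 1) = ∑ j ∈ sᶜ, Finsupp.single (oddWord s j) 1 := by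
  rw [opF, LinearMap.sum_apply, ← Finset.sum_add_sum_compl s,
    Finset.sum_eq_zero fun p hp =>
      signedFactorAction_single_of_eq_zero (by simp [evenWord, fmap, hp]),
    zero_add]
  refine Finset.sum_congr rfl fun p hp => ?_
  have hp : p ∉ s := Finset.mem_compl.mp hp
  rw [signedFactorAction_single_of_eq_single (i := 1) (a := 1) (by simp [evenWord, fmap, hp]),
    koszulSign_evenWord, one_smul, update_evenWord hp]

theorem opF_single_oddWord {j : Fin n} (hj : j ∉ s) :
    opF n (Finsupp.single (oddWord s j) 1)
      = Finsupp.single (evenWord (insert j s)) 1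
        + ∑ p ∈ sᶜ.erase j,
            (if j < p then (-1 : ℂ) else 1) • Finsupp.single (oddPairWord s j p) 1 := by
  rw [opF, LinearMap.sum_apply, ← Finset.sum_add_sum_compl (insert j s), Finset.sum_insert hj,
    Finset.sum_eq_zero fun p hp =>
      signedFactorAction_single_of_eq_zero (by simp [oddWord, fmap, hp]),
    add_zero,
    signedFactorAction_single_of_eq_single (i := 2) (a := 1) (by simp [oddWord, fmap, hj]),
    koszulSign_oddWord hj, if_neg (lt_irrefl j), one_smul, update_oddWord_self,
    ← Finset.compl_insert]
  congr 1
  refine Finset.sum_congr rfl fun p hp => ?_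
  have hps : p ∉ s := fun h => Finset.mem_compl.mp hp (Finset.mem_insert_of_mem h)
  have hpj : p ≠ j := fun h => Finset.mem_compl.mp hp (h ▸ Finset.mem_insert_self j s)
  rw [signedFactorAction_single_of_eq_single (i := 1) (a := 1)
    (by simp [oddWord, fmap, hps, hpj]), koszulSign_oddWord hj, update_oddWord hps]

theorem opF_sq_single_evenWord (s : Finset (Fin n)) :
    opF n (opF n (Finsupp.single (evenWord s) 1))
      = ∑ j ∈ sᶜ, Finsupp.single (evenWord (insert j s)) 1 := by
  have hcancel : ∀ i j : Fin n, i ≠ j →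
      (if i < j then (-1 : ℂ) else 1) • Finsupp.single (oddPairWord s i j) (1 : ℂ)
        + (if j < i then (-1 : ℂ) else 1) • Finsupp.single (oddPairWord s j i) 1 = 0 := by
    intro i j hij
    rw [oddPairWord_comm s j i]
    rcases hij.lt_or_gt with h | h <;> simp [h, h.not_gt]
  rw [opF_single_evenWord, map_sum,
    Finset.sum_congr rfl fun j hj => opF_single_oddWord (Finset.mem_compl.mp hj),
    Finset.sum_add_distrib, Finset.sum_sum_erase_eq_zero_of_antisymm _ _ hcancel, add_zero]

theorem opF_pow_two_mul_single_evenWord_empty (k : ℕ) :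
    (opF n ^ (2 * k)) (Finsupp.single (evenWord ∅) 1)
      = k.factorial •
          ∑ s ∈ Finset.powersetCard k Finset.univ, Finsupp.single (evenWord s) 1 := by
  induction k with
  | zero => simp
  | succ k ih =>
    rw [show 2 * (k + 1) = 2 + 2 * k by ring, pow_add, sq, Module.End.mul_apply, ih,
      Module.End.mul_apply, map_nsmul, map_nsmul, map_sum, map_sum,
      Finset.sum_congr rfl fun s _ => opF_sq_single_evenWord s,
      Finset.sum_powersetCard_sum_compl_insert fun t => Finsupp.single (evenWord t) 1, smul_smul,
      Nat.factorial_succ, mul_comm]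

end ActionOfF

/-- Lemma 5.3(ii): with `F = Σ_p f2^{(p)}` on `U^{⊗n}`, for odd powers
`F^{2k+1}((ε1∧ε2)^{⊗n}) = k! · Σ_{1≤i1<⋯<ik≤n} Σ_{j∉{i1,…,ik}} ⊗_t w_t`, where
`w_t = ε1∧ε2̄` for `t ∈ {i1,…,ik}`, `w_t = ε1∧ε0` for `t = j`, and `w_t = ε1∧ε2`
otherwise. -/
theorem F_odd_pow_apply (n k : ℕ) :
    ((∑ p : Fin n, signedFactorAction par3 fmap p) ^ (2 * k + 1))
        (Finsupp.single (fun _ => (0 : Fin 3)) 1)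
      = (k.factorial : ℂ) •
          ∑ s ∈ Finset.powersetCard k (Finset.univ : Finset (Fin n)),
            ∑ j ∈ sᶜ,
              Finsupp.single
                (fun t => if t ∈ s then (2 : Fin 3) else if t = j then 1 else 0)
                (1 : ℂ) := by
  rw [← evenWord_empty]
  change (opF n ^ (2 * k + 1)) _ = _
  rw [pow_succ', Module.End.mul_apply, opF_pow_two_mul_single_evenWord_empty, map_nsmul, map_sum,
    Finset.sum_congr rfl fun s _ => opF_single_evenWord s, Nat.cast_smul_eq_nsmul]
  rfl
end

section
/- Define a KN tableau of shape λ=(λ1,λ2) (λ1 ≥ λ2 ≥ 0) over the ordered alphabet 1 < 2 < 0 < 2̄ < 1̄ as a filling with rows weakly increasing where 0 does not repeat in a row, columns strictly increasing where 0 may repeat, with 1 and 1̄ never in the same column, and with the configurations [2 above ·; · ; 2̄ in next column second row] and [0 first row; 2̄ second row of next column] forbidden. Then the map T ↦ (b1(T), b2(T), b3(T), b4(T)) — where b1 = 2·#{entries in row 2 that are ≥ 2̄} + #{entries 0 in row 2}, b2 = #{entries in row 1 > 1} + #{entries in row 2 > 2̄}, b3 = 2·#{entries in row 1 ≥ 2̄}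 + #{entries 0 in row 1}, b4 = #{entries in row 1 > 2̄} — is injective on the set of KN tableaux of shape λ. -/
/-- A Kashiwara–Nakashima tableau of `spo(4|1)` of two-row shape
`λ = (m1+m2, m2)`. The alphabet `{1, 2, 0, 2̄, 1̄}` with order `1<2<0<2̄<1̄` is
encoded as `Fin 5` (so `0 ↦ 1`, `1 ↦ 2`, `2 ↦ 0`, `3 ↦ 2̄`, `4 ↦ 1̄`).
Conditions: rows weakly increase and `0` does not repeat in a row; columns
strictly increase except that `0` may repeat; `1` and `1̄` never share a column;
the two forbidden adjacent-column configurations of Definition 3.1(iii):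
`2` in row 1 with `2̄` in row 2 of the next column, and `0` in row 1 with `2̄`
in row 2 of the next column. -/
structure KNTableau (m1 m2 : ℕ) where
  row1 : Fin (m1 + m2) → Fin 5
  row2 : Fin m2 → Fin 5
  mono1 : Monotone row1
  mono2 : Monotone row2
  zeroRow1 : ∀ i j : Fin (m1 + m2), i < j → ¬(row1 i = 2 ∧ row1 j = 2)
  zeroRow2 : ∀ i j : Fin m2, i < j → ¬(row2 i = 2 ∧ row2 j = 2)
  col : ∀ j : Fin m2,
    row1 (Fin.castLE (Nat.le_add_left m2 m1) j) < row2 j ∨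
      (row1 (Fin.castLE (Nat.le_add_left m2 m1) j) = 2 ∧ row2 j = 2)
  noOneOneBar : ∀ j : Fin m2,
    ¬(row1 (Fin.castLE (Nat.le_add_left m2 m1) j) = 0 ∧ row2 j = 4)
  forbidTwo : ∀ j : Fin m2, ∀ h : (j : ℕ) + 1 < m2,
    ¬(row1 (Fin.castLE (Nat.le_add_left m2 m1) j) = 1 ∧ row2 ⟨j + 1, h⟩ = 3)
  forbidZero : ∀ j : Fin m2, ∀ h : (j : ℕ) + 1 < m2,
    ¬(row1 (Fin.castLE (Nat.le_add_left m2 m1) j) = 2 ∧ row2 ⟨j + 1, h⟩ = 3)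

namespace KNTableau

variable {m1 m2 : ℕ} (T : KNTableau m1 m2)

/-- `b1 = 2·#{row-2 entries ≥ 2̄} + #{row-2 entries = 0}`. -/
def b1 : ℕ :=
  2 * (Finset.univ.filter fun j => 3 ≤ T.row2 j).card +
    (Finset.univ.filter fun j => T.row2 j = 2).card

/-- `b2 = #{row-1 entries > 1} + #{row-2 entries > 2̄}`. -/
def b2 : ℕ :=
  (Finset.univ.filter fun i => 0 < T.row1 i).card +
    (Finset.univ.filter fun j => 3 < T.row2 j).card

/-- `b3 = 2·#{row-1 entries ≥ 2̄} + #{row-1 entries = 0}`. -/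
def b3 : ℕ :=
  2 * (Finset.univ.filter fun i => 3 ≤ T.row1 i).card +
    (Finset.univ.filter fun i => T.row1 i = 2).card

/-- `b4 = #{row-1 entries > 2̄}`. -/
def b4 : ℕ :=
  (Finset.univ.filter fun i => 3 < T.row1 i).card

end KNTableau

/-!
A weakly increasing row over a finite chain is determined by the numbers of its entries `≥ k`,
for all `k`. Since `0` occurs at most once per row, `b3` and `b1` give these numbers for `k = 0`
and `k = 2̄` in both rows, `b4` is the number of `1̄` in row 1, and every row-2 entry is `> 1`.
What remains is how `b2 = #{row 1 > 1} + #{row 2 = 1̄}` splits. The column of the first `1̄` in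
row 2 has no `1` above it, so row 1 is `> 1` from that column on; and the column of the last
`2̄` in row 2 has, by the forbidden configurations, a `1` in row 1 just to its left. If two
tableaux with the same statistics had different numbers of `1̄` in row 2, the one with fewer
would have a `2̄` in row 2, and these two bounds contradict each other.
-/

open Finset

section numGe

variable {α : Type*} [LinearOrder α] {n : ℕ}

def numGe (f : Fin n → α) (k : α) : ℕ := #{i | k ≤ f i}

lemma numGe_le (f : Fin n → α) (k : α) : numGe f k ≤ n :=
  (card_filter_le _ _).trans_eq (card_fin n)

lemma numGe_anti (f : Fin n → α) {k k' : α} (h : k ≤ k') : numGe f k' ≤ numGe f k :=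
  card_le_card <| monotone_filter_right _ fun _ _ => h.trans

lemma numGe_eq_of_forall_le {f : Fin n → α} {k : α} (h : ∀ i, k ≤ f i) : numGe f k = n := by
  rw [numGe, filter_true_of_mem fun i _ => h i, card_univ, Fintype.card_fin]

lemma numGe_bot [OrderBot α] (f : Fin n → α) : numGe f ⊥ = n :=
  numGe_eq_of_forall_le fun _ => bot_le

lemma numGe_eq_card_lt {f : Fin n → α} {k k' : α} (hk : k ⋖ k') :
    numGe f k' = #{i | k < f i} := by
  simp only [numGe, hk.lt_iff_le_right]

lemma numGe_eq_add_card_eq (f : Fin n → α) {k k' : α} (hk : k ⋖ k') :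
    numGe f k = numGe f k' + #{i | f i = k} := by
  rw [numGe_eq_card_lt hk, numGe, ← card_union_of_disjoint <|
    disjoint_filter.2 fun _ _ hlt heq => hlt.ne' heq]
  congr 1
  ext i
  simp only [mem_filter, mem_univ, true_and, mem_union, le_iff_lt_or_eq, eq_comm]

lemma card_filter_eq_le_one {f : Fin n → α} {k : α}
    (h : ∀ i j : Fin n, i < j → ¬(f i = k ∧ f j = k)) : #{i | f i = k} ≤ 1 := by
  rw [card_le_one]
  intro i hi j hj
  simp only [mem_filter, mem_univ, true_and] at hi hj
  by_contra hne
  rcases lt_or_gt_of_ne hne with hij | hji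
  · exact h i j hij ⟨hi, hj⟩
  · exact h j i hji ⟨hj, hi⟩

/-- `{i | k ≤ f i}` is a final segment of `Fin n`, of length `numGe f k`. -/
lemma Monotone.le_apply_iff {f : Fin n → α} (hf : Monotone f) (k : α) (i : Fin n) :
    k ≤ f i ↔ n - numGe f k ≤ i := by
  constructor
  · intro hi
    have : Ici i ⊆ ({j | k ≤ f j} : Finset (Fin n)) := fun j hj =>
      mem_filter.2 ⟨mem_univ j, hi.trans (hf (mem_Ici.1 hj))⟩
    have := card_le_card this
    rw [Fin.card_Ici] at this
    unfold numGe
    omega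
  · intro hi
    by_contra hk
    have : ({j | k ≤ f j} : Finset (Fin n)) ⊆ Ioi i := fun j hj => by
      simp only [mem_filter, mem_univ, true_and] at hj
      exact mem_Ioi.2 (lt_of_not_ge fun hji => hk (hj.trans (hf hji)))
    have := card_le_card this
    rw [Fin.card_Ioi] at this
    unfold numGe at hi
    omega

lemma Monotone.eq_of_numGe_eq {f g : Fin n → α} (hf : Monotone f) (hg : Monotone g)
    (h : ∀ k, numGe f k = numGe g k) : f = g := by
  funext i
  apply le_antisymm
  · rw [hg.le_apply_iff, ← h, ← hf.le_apply_iff]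
  · rw [hf.le_apply_iff, h, ← hg.le_apply_iff]

lemma numGe_eq_of_two_mul_add_eq {f g : Fin n → α} {k k' : α} (hk : k ⋖ k')
    (hf : #{i | f i = k} ≤ 1) (hg : #{i | g i = k} ≤ 1)
    (h : 2 * numGe f k' + #{i | f i = k} = 2 * numGe g k' + #{i | g i = k}) :
    numGe f k' = numGe g k' ∧ numGe f k = numGe g k := by
  rw [numGe_eq_add_card_eq f hk, numGe_eq_add_card_eq g hk]
  omega

lemma Monotone.apply_eq_of_numGe_lt {f : Fin n → α} (hf : Monotone f) {k k' : α} (hk : k ⋖ k')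
    (h : numGe f k' < numGe f k) :
    f ⟨n - numGe f k' - 1, by have := numGe_le f k; omega⟩ = k := by
  have := numGe_le f k
  refine le_antisymm (hk.le_of_lt (lt_of_not_ge fun h' => ?_)) ((hf.le_apply_iff k _).2 ?_)
  · have := (hf.le_apply_iff k' _).1 h'
    simp only at this
    omega
  · simp only
    omega

end numGe

namespace KNTableau

variable {m1 m2 : ℕ} (T : KNTableau m1 m2)

abbrev above (j : Fin m2) : Fin 5 := T.row1 (Fin.castLE (Nat.le_add_left m2 m1) j)

lemma one_le_row2 (j : Fin m2) : 1 ≤ T.row2 j := by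
  rcases T.col j with h | ⟨_, h⟩
  · exact (Fin.zero_le _).trans_lt h
  · exact h ▸ by decide

lemma b2_eq : T.b2 = numGe T.row1 1 + numGe T.row2 4 := by
  rw [b2, numGe_eq_card_lt (k := 0), numGe_eq_card_lt (k := 3)] <;>
    simp [Nat.covBy_iff_add_one_eq]

lemma b4_eq : T.b4 = numGe T.row1 4 := by
  rw [b4, numGe_eq_card_lt (k := 3)]
  simp [Nat.covBy_iff_add_one_eq]

lemma above_eq_zero_of_row2_succ_eq_three (j : Fin m2) (hj : (j : ℕ) + 1 < m2)
    (h : T.row2 ⟨j + 1, hj⟩ = 3) : T.above j = 0 := by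
  have hnext : T.above ⟨j + 1, hj⟩ < 3 := by
    rcases T.col ⟨j + 1, hj⟩ with hlt | ⟨_, h2⟩
    · exact h ▸ hlt
    · exact absurd (h2.symm.trans h) (by decide)
  have hle : T.above j ≤ T.above ⟨j + 1, hj⟩ := T.mono1 (Fin.le_def.2 (by simp))
  have h1 : T.above j ≠ 1 := fun h1 => T.forbidTwo j hj ⟨h1, h⟩
  have h2 : T.above j ≠ 2 := fun h2 => T.forbidZero j hj ⟨h2, h⟩
  omega

lemma numGe_row1_one_lower_bound (h : 0 < numGe T.row2 4) :
    m1 + numGe T.row2 4 ≤ numGe T.row1 1 := by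
  have := numGe_le T.row2 4
  have := numGe_le T.row1 1
  set j : Fin m2 := ⟨m2 - numGe T.row2 4, by omega⟩
  have hj : T.row2 j = 4 := le_antisymm (Fin.le_last _) ((T.mono2.le_apply_iff 4 j).2 le_rfl)
  have : 1 ≤ T.above j := Fin.pos_of_ne_zero fun h0 => T.noOneOneBar j ⟨h0, hj⟩
  have := (T.mono1.le_apply_iff 1 _).1 this
  simp only [Fin.val_castLE, j] at this
  omega

lemma numGe_row1_one_upper_bound (h : numGe T.row2 4 < numGe T.row2 3) :
    numGe T.row1 1 ≤ m1 + numGe T.row2 4 + 1 := by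
  have := numGe_le T.row2 3
  have := numGe_le T.row1 1
  rcases lt_or_ge m2 (numGe T.row2 4 + 2) with hm | hm
  · omega
  have hp := T.mono2.apply_eq_of_numGe_lt (by simp [Nat.covBy_iff_add_one_eq]) h
  set q : Fin m2 := ⟨m2 - numGe T.row2 4 - 2, by omega⟩
  have hq := T.above_eq_zero_of_row2_succ_eq_three q (by simp only [q]; omega)
    (by convert hp using 3; simp only [q]; omega)
  have hq1 : ¬1 ≤ T.above q := by rw [hq]; decide
  have := (T.mono1.le_apply_iff 1 (Fin.castLE _ q)).not.1 hq1
  simp only [Fin.val_castLE, q] at this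
  omega

lemma numGe_row2_four_le_of_b2_eq {T T' : KNTableau m1 m2}
    (h3 : numGe T.row2 3 = numGe T'.row2 3) (h2 : T.b2 = T'.b2) :
    numGe T.row2 4 ≤ numGe T'.row2 4 := by
  rw [b2_eq, b2_eq] at h2
  by_contra! hlt
  have := T.numGe_row1_one_lower_bound (by omega)
  have := numGe_anti T.row2 (show (3 : Fin 5) ≤ 4 by decide)
  have := T'.numGe_row1_one_upper_bound (by omega)
  omega

lemma ext_of_numGe {T T' : KNTableau m1 m2} (h1 : ∀ k, numGe T.row1 k = numGe T'.row1 k)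
    (h2 : ∀ k, numGe T.row2 k = numGe T'.row2 k) : T = T' := by
  have e1 := T.mono1.eq_of_numGe_eq T'.mono1 h1
  have e2 := T.mono2.eq_of_numGe_eq T'.mono2 h2
  cases T; cases T'; cases e1; cases e2; rfl

end KNTableau

open KNTableau in
/-- The statistics map `T ↦ (b1, b2, b3, b4)` is injective on KN tableaux of
shape `(m1+m2, m2)`. -/
theorem knTableau_stats_injective (m1 m2 : ℕ) :
    Function.Injective (fun T : KNTableau m1 m2 => (b1 T, b2 T, b3 T, b4 T)) := by
  intro T T' h
  simp only [Prod.mk.injEq] at h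
  obtain ⟨h1, h2, h3, h4⟩ := h
  have h23 : (2 : Fin 5) ⋖ 3 := by simp [Nat.covBy_iff_add_one_eq]
  obtain ⟨hB3, hB2⟩ := numGe_eq_of_two_mul_add_eq h23
    (card_filter_eq_le_one T.zeroRow2) (card_filter_eq_le_one T'.zeroRow2) h1
  obtain ⟨hA3, hA2⟩ := numGe_eq_of_two_mul_add_eq h23
    (card_filter_eq_le_one T.zeroRow1) (card_filter_eq_le_one T'.zeroRow1) h3
  have hB4 := (numGe_row2_four_le_of_b2_eq hB3 h2).antisymm
    (numGe_row2_four_le_of_b2_eq hB3.symm h2.symm)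
  rw [b2_eq, b2_eq] at h2
  rw [b4_eq, b4_eq] at h4
  have hA1 : numGe T.row1 1 = numGe T'.row1 1 := by omega
  refine ext_of_numGe (fun k => ?_) (fun k => ?_) <;> fin_cases k
  exacts [(numGe_bot _).trans (numGe_bot _).symm, hA1, hA2, hA3, h4,
    (numGe_bot _).trans (numGe_bot _).symm,
    (numGe_eq_of_forall_le T.one_le_row2).trans (numGe_eq_of_forall_le T'.one_le_row2).symm,
    hB2, hB3, hB4]
end

section
/- For every KN tableau T of spo(4|1) of shape λ = (m1+m2, m2), the statistics (b1,b2,b3,b4) satisfy: 0 ≤ b1 ≤ 2m2, 0 ≤ b2 ≤ m1 + b1, 0 ≤ b3 ≤ min(b2 + m1, 2b2), and 0 ≤ 2b4 ≤ b3 with b4 ≤ m1. -/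
open Finset in
lemma KNTableau.count_aux {m1 m2 : ℕ} (T : KNTableau m1 m2)
    (p q : Fin 5 → Prop) [DecidablePred p] [DecidablePred q]
    (h : ∀ j : Fin m2, p (T.row1 (Fin.castLE (Nat.le_add_left m2 m1) j)) → q (T.row2 j)) :
    (univ.filter fun i => p (T.row1 i)).card ≤
      (univ.filter fun j => q (T.row2 j)).card + m1 := by
  classical
  have hsplit :
      ((univ.filter fun i : Fin (m1+m2) => p (T.row1 i)).filter fun i : Fin (m1+m2) => (i:ℕ) < m2).card +
      ((univ.filter fun i : Fin (m1+m2) => p (T.row1 i)).filter fun i : Fin (m1+m2) => ¬ (i:ℕ) < m2).card =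
      (univ.filter fun i : Fin (m1+m2) => p (T.row1 i)).card :=
    Finset.card_filter_add_card_filter_not _
  have h2 : ((univ.filter fun i : Fin (m1+m2) => p (T.row1 i)).filter
      fun i : Fin (m1+m2) => ¬ (i:ℕ) < m2).card ≤ m1 := by
    have hle : ((univ.filter fun i : Fin (m1+m2) => p (T.row1 i)).filter
        fun i : Fin (m1+m2) => ¬ (i:ℕ) < m2).card ≤ (Finset.Ico m2 (m1+m2)).card := by
      apply Finset.card_le_card_of_injOn (fun i : Fin (m1+m2) => (i : ℕ))
      · intro i hi
        simp only [Finset.mem_coe, mem_filter, mem_univ, true_and] at hi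
        have := i.isLt
        simp only [Finset.mem_coe, Finset.mem_Ico]
        omega
      · intro a _ b _ hab
        exact Fin.val_injective hab
    rw [Nat.card_Ico] at hle
    omega
  have h1 : ((univ.filter fun i : Fin (m1+m2) => p (T.row1 i)).filter
      fun i : Fin (m1+m2) => (i:ℕ) < m2).card ≤ (univ.filter fun j : Fin m2 => q (T.row2 j)).card := by
    rcases Nat.eq_zero_or_pos m2 with hm | hm
    · subst hm; simp
    · apply Finset.card_le_card_of_injOn
        (fun i : Fin (m1+m2) => (⟨(i:ℕ) % m2, Nat.mod_lt _ hm⟩ : Fin m2))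
      · intro i hi
        simp only [Finset.mem_coe, mem_filter, mem_univ, true_and] at hi
        obtain ⟨hp, hlt⟩ := hi
        have hmod : (i:ℕ) % m2 = (i:ℕ) := Nat.mod_eq_of_lt hlt
        simp only [Finset.mem_coe, mem_filter, mem_univ, true_and]
        have heq : (⟨(i:ℕ) % m2, Nat.mod_lt _ hm⟩ : Fin m2) = ⟨(i:ℕ), hlt⟩ :=
          Fin.ext hmod
        rw [heq]
        exact h ⟨(i:ℕ), hlt⟩ hp
      · intro a ha b hb hab
        have ha' : (a:ℕ) < m2 := (Finset.mem_filter.1 ha).2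
        have hb' : (b:ℕ) < m2 := (Finset.mem_filter.1 hb).2
        have hva : ((a:ℕ) % m2) = ((b:ℕ) % m2) := congrArg Fin.val hab
        have h1 := Nat.mod_eq_of_lt ha'
        have h2 := Nat.mod_eq_of_lt hb'
        exact Fin.ext (by omega)
  omega


open KNTableau in
/-- The statistics of a KN tableau of shape `(m1+m2, m2)` satisfy the defining
inequalities of the Verma parameter set. -/
theorem knTableau_stats_bounds (m1 m2 : ℕ) (T : KNTableau m1 m2) :
    b1 T ≤ 2 * m2 ∧ b2 T ≤ m1 + b1 T ∧
      b3 T ≤ min (b2 T + m1) (2 * b2 T) ∧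
      2 * b4 T ≤ b3 T ∧ b4 T ≤ m1 := by
  classical
  -- abbreviations
  set A := (Finset.univ.filter fun j => 3 ≤ T.row2 j).card with hA
  set Z2 := (Finset.univ.filter fun j => T.row2 j = 2).card with hZ2
  set P := (Finset.univ.filter fun i => 0 < T.row1 i).card with hP
  set Q := (Finset.univ.filter fun j => 3 < T.row2 j).card with hQ
  set R := (Finset.univ.filter fun i => 3 ≤ T.row1 i).card with hR
  set Z1 := (Finset.univ.filter fun i => T.row1 i = 2).card with hZ1
  set S := (Finset.univ.filter fun i => 3 < T.row1 i).card with hS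
  -- column implications
  have key1 : ∀ a b : Fin 5, (a < b ∨ (a = 2 ∧ b = 2)) → 0 < a → 2 ≤ b := by decide
  have key2 : ∀ a b : Fin 5, (a < b ∨ (a = 2 ∧ b = 2)) → 3 ≤ a → 3 < b := by decide
  have key3 : ∀ a b : Fin 5, (a < b ∨ (a = 2 ∧ b = 2)) → 3 < a → False := by decide
  -- P ≤ #{row2 ≥ 2} + m1
  have hPa : P ≤ (Finset.univ.filter fun j => 2 ≤ T.row2 j).card + m1 :=
    T.count_aux (fun x => 0 < x) (fun x => 2 ≤ x)
      (fun j hp => key1 _ _ (T.col j) hp)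
  -- #{row2 ≥ 2} ≤ A + Z2
  have hsub : (Finset.univ.filter fun j => 2 ≤ T.row2 j).card ≤ A + Z2 := by
    have hsub' : (Finset.univ.filter fun j => 2 ≤ T.row2 j) ⊆
        (Finset.univ.filter fun j => 3 ≤ T.row2 j) ∪
        (Finset.univ.filter fun j => T.row2 j = 2) := by
      intro j hj
      simp only [Finset.mem_filter, Finset.mem_univ, true_and, Finset.mem_union] at hj ⊢
      revert hj
      have : ∀ x : Fin 5, 2 ≤ x → 3 ≤ x ∨ x = 2 := by decide
      exact this _
    calc (Finset.univ.filter fun j => 2 ≤ T.row2 j).card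
        ≤ _ := Finset.card_le_card hsub'
      _ ≤ A + Z2 := Finset.card_union_le _ _
  have hRQ : R ≤ Q + m1 :=
    T.count_aux (fun x => 3 ≤ x) (fun x => 3 < x)
      (fun j hp => key2 _ _ (T.col j) hp)
  have hSm : S ≤ (Finset.univ.filter fun _ : Fin m2 => False).card + m1 :=
    T.count_aux (fun x => 3 < x) (fun _ => False)
      (fun j hp => key3 _ _ (T.col j) hp)
  have hfalse : (Finset.univ.filter fun _ : Fin m2 => False).card = 0 := by simp
  -- R + Z1 ≤ P
  have hRZ1 : R + Z1 ≤ P := by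
    have hdisj : Disjoint (Finset.univ.filter fun i => 3 ≤ T.row1 i)
        (Finset.univ.filter fun i => T.row1 i = 2) := by
      rw [Finset.disjoint_left]
      intro i hi hi'
      simp only [Finset.mem_filter, Finset.mem_univ, true_and] at hi hi'
      rw [hi'] at hi
      exact absurd hi (by decide)
    have hsub2 : (Finset.univ.filter fun i => 3 ≤ T.row1 i) ∪
        (Finset.univ.filter fun i => T.row1 i = 2) ⊆
        (Finset.univ.filter fun i => 0 < T.row1 i) := by
      intro i hi
      simp only [Finset.mem_filter, Finset.mem_univ, true_and, Finset.mem_union] at hi ⊢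
      revert hi
      have : ∀ x : Fin 5, (3 ≤ x ∨ x = 2) → 0 < x := by decide
      exact this _
    calc R + Z1 = _ := (Finset.card_union_of_disjoint hdisj).symm
      _ ≤ P := Finset.card_le_card hsub2
  -- A + Z2 ≤ m2
  have hAZ2 : A + Z2 ≤ m2 := by
    have hdisj : Disjoint (Finset.univ.filter fun j => 3 ≤ T.row2 j)
        (Finset.univ.filter fun j => T.row2 j = 2) := by
      rw [Finset.disjoint_left]
      intro j hj hj'
      simp only [Finset.mem_filter, Finset.mem_univ, true_and] at hj hj'
      rw [hj'] at hj
      exact absurd hj (by decide)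
    calc A + Z2 = _ := (Finset.card_union_of_disjoint hdisj).symm
      _ ≤ Finset.univ.card := Finset.card_le_card (Finset.subset_univ _)
      _ = m2 := by simp
  -- Q ≤ A, S ≤ R
  have hQA : Q ≤ A := by
    apply Finset.card_le_card
    intro j hj
    simp only [Finset.mem_filter, Finset.mem_univ, true_and] at hj ⊢
    exact le_of_lt hj
  have hSR : S ≤ R := by
    apply Finset.card_le_card
    intro i hi
    simp only [Finset.mem_filter, Finset.mem_univ, true_and] at hi ⊢
    exact le_of_lt hi
  simp only [b1, b2, b3, b4, ← hA, ← hZ2, ← hP, ← hQ, ← hR, ← hZ1, ← hS]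
  omega
end

section
/- The map T ↦ (b1,b2,b3,b4) from KN tableaux of shape λ = (m1+m2,m2) to quadruples of nonnegative integers satisfying b1 ≤ 2m2, b2 ≤ m1+b1, b3 ≤ min(b2+m1, 2b2), 2b4 ≤ b3, b4 ≤ m1 is a bijection; in particular the number of KN tableaux of shape λ equals the number of such quadruples. -/
namespace KNAux

lemma card_filter_val_lt (n k : ℕ) (hk : k ≤ n) :
    ((Finset.univ : Finset (Fin n)).filter fun i : Fin n => (i : ℕ) < k).card = k := by
  have h : ((Finset.univ : Finset (Fin n)).filter fun i : Fin n => (i : ℕ) < k) =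
      Finset.map (Fin.castLEEmb hk) Finset.univ := by
    ext i
    simp only [Finset.mem_filter, Finset.mem_univ, true_and, Finset.mem_map]
    constructor
    · intro h
      refine ⟨⟨i, h⟩, ?_⟩
      rfl
    · rintro ⟨j, -, rfl⟩; exact j.2
  rw [h, Finset.card_map, Finset.card_univ, Fintype.card_fin]

variable {n : ℕ}

def cnt (f : Fin n → Fin 5) (v : ℕ) : ℕ :=
  (Finset.univ.filter fun i : Fin n => (f i : ℕ) ≤ v).card

lemma cnt_le (f : Fin n → Fin 5) (v : ℕ) : cnt f v ≤ n := by
  simpa [cnt] using Finset.card_filter_le Finset.univ fun i : Fin n => (f i : ℕ) ≤ v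

lemma cnt_mono (f : Fin n → Fin 5) {v w : ℕ} (h : v ≤ w) : cnt f v ≤ cnt f w := by
  apply Finset.card_le_card
  intro i hi
  simp only [Finset.mem_filter, Finset.mem_univ, true_and] at *
  omega

lemma cnt_four (f : Fin n → Fin 5) : cnt f 4 = n := by
  rw [cnt]
  have h : (Finset.univ.filter fun i : Fin n => (f i : ℕ) ≤ 4) = Finset.univ := by
    apply Finset.filter_true_of_mem; intro i _; omega
  rw [h, Finset.card_univ, Fintype.card_fin]

lemma lt_cnt_iff {f : Fin n → Fin 5} (hf : Monotone f) (i : Fin n) (v : ℕ) :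
    (f i : ℕ) ≤ v ↔ (i : ℕ) < cnt f v := by
  constructor
  · intro h
    have hsub : Finset.Iic i ⊆ Finset.univ.filter fun j : Fin n => (f j : ℕ) ≤ v := by
      intro j hj
      simp only [Finset.mem_Iic] at hj
      simp only [Finset.mem_filter, Finset.mem_univ, true_and]
      exact le_trans (by have := hf hj; omega) h
    have hc := Finset.card_le_card hsub
    rw [Fin.card_Iic] at hc
    exact hc
  · intro h
    by_contra hc
    have hsub : (Finset.univ.filter fun j : Fin n => (f j : ℕ) ≤ v) ⊆ Finset.Iio i := by
      intro j hj
      simp only [Finset.mem_filter, Finset.mem_univ, true_and] at hj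
      simp only [Finset.mem_Iio]
      by_contra hji
      have := hf (show i ≤ j by omega)
      omega
    have hc2 := Finset.card_le_card hsub
    rw [Fin.card_Iio] at hc2
    have : cnt f v ≤ (i : ℕ) := hc2
    omega

lemma mono_ext {f g : Fin n → Fin 5} (hf : Monotone f) (hg : Monotone g)
    (h : ∀ v, cnt f v = cnt g v) : f = g := by
  funext i
  have h1 := lt_cnt_iff hf i (g i : ℕ)
  have h2 := lt_cnt_iff hg i (f i : ℕ)
  have h3 := lt_cnt_iff hf i (f i : ℕ)
  have h4 := lt_cnt_iff hg i (g i : ℕ)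
  have e1 := h (g i : ℕ); have e2 := h (f i : ℕ)
  exact Fin.ext (by omega)

-- complements
lemma card_compl (p : Fin n → Prop) [DecidablePred p] :
    (Finset.univ.filter p).card + (Finset.univ.filter fun i => ¬ p i).card = n := by
  rw [Finset.card_filter_add_card_filter_not, Finset.card_univ, Fintype.card_fin]

lemma card_ge3 (f : Fin n → Fin 5) :
    (Finset.univ.filter fun i : Fin n => 3 ≤ f i).card + cnt f 2 = n := by
  have h : (Finset.univ.filter fun i : Fin n => 3 ≤ f i) =
      Finset.univ.filter fun i : Fin n => ¬ ((f i : ℕ) ≤ 2) := by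
    apply Finset.filter_congr; intro i _
    constructor
    · intro h; omega
    · intro h; omega
  rw [h, cnt, Nat.add_comm, card_compl]

lemma card_gt3 (f : Fin n → Fin 5) :
    (Finset.univ.filter fun i : Fin n => 3 < f i).card + cnt f 3 = n := by
  have h : (Finset.univ.filter fun i : Fin n => 3 < f i) =
      Finset.univ.filter fun i : Fin n => ¬ ((f i : ℕ) ≤ 3) := by
    apply Finset.filter_congr; intro i _
    constructor
    · intro h; omega
    · intro h; omega
  rw [h, cnt, Nat.add_comm, card_compl]

lemma card_pos' (f : Fin n → Fin 5) :
    (Finset.univ.filter fun i : Fin n => 0 < f i).card + cnt f 0 = n := by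
  have h : (Finset.univ.filter fun i : Fin n => 0 < f i) =
      Finset.univ.filter fun i : Fin n => ¬ ((f i : ℕ) ≤ 0) := by
    apply Finset.filter_congr; intro i _
    constructor
    · intro h; omega
    · intro h; omega
  rw [h, cnt, Nat.add_comm, card_compl]

lemma card_eq2 (f : Fin n → Fin 5) :
    cnt f 1 + (Finset.univ.filter fun i : Fin n => f i = 2).card = cnt f 2 := by
  have key := Finset.card_filter_add_card_filter_not
    (s := Finset.univ.filter fun i : Fin n => (f i : ℕ) ≤ 2)
    (p := fun i : Fin n => (f i : ℕ) ≤ 1)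
  rw [Finset.filter_filter, Finset.filter_filter] at key
  have h1 : (Finset.univ.filter fun i : Fin n => (f i : ℕ) ≤ 2 ∧ (f i : ℕ) ≤ 1) =
      Finset.univ.filter fun i : Fin n => (f i : ℕ) ≤ 1 := by
    apply Finset.filter_congr; intro i _
    constructor
    · intro h; omega
    · intro h; omega
  have h2 : (Finset.univ.filter fun i : Fin n => (f i : ℕ) ≤ 2 ∧ ¬ (f i : ℕ) ≤ 1) =
      Finset.univ.filter fun i : Fin n => f i = 2 := by
    apply Finset.filter_congr; intro i _
    constructor
    · intro h; exact Fin.ext (by omega)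
    · intro h
      have h2 : (f i : ℕ) = 2 := by rw [h]; rfl
      omega
  rw [h1, h2] at key
  rw [cnt, cnt, ← key]

-- builder
def mkRow (P0 P1 P2 P3 : ℕ) (i : Fin n) : Fin 5 :=
  ⟨if (i : ℕ) < P0 then 0 else if (i : ℕ) < P1 then 1 else if (i : ℕ) < P2 then 2
    else if (i : ℕ) < P3 then 3 else 4, by split_ifs <;> omega⟩

lemma mkRow_val (P0 P1 P2 P3 : ℕ) (i : Fin n) :
    (mkRow P0 P1 P2 P3 i : ℕ) =
      if (i : ℕ) < P0 then 0 else if (i : ℕ) < P1 then 1 else if (i : ℕ) < P2 then 2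
        else if (i : ℕ) < P3 then 3 else 4 := rfl

lemma mkRow_mono {P0 P1 P2 P3 : ℕ} (h01 : P0 ≤ P1) (h12 : P1 ≤ P2) (h23 : P2 ≤ P3) :
    Monotone (mkRow P0 P1 P2 P3 : Fin n → Fin 5) := by
  intro i j hij
  have hij' : (i : ℕ) ≤ (j : ℕ) := hij
  rw [Fin.le_def, mkRow_val, mkRow_val]
  split_ifs <;> omega

lemma cnt_mkRow0 {P0 P1 P2 P3 : ℕ} (h0n : P0 ≤ n) :
    cnt (mkRow P0 P1 P2 P3 : Fin n → Fin 5) 0 = P0 := by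
  rw [cnt]
  have h : (Finset.univ.filter fun i : Fin n => (mkRow P0 P1 P2 P3 i : ℕ) ≤ 0) =
      Finset.univ.filter fun i : Fin n => (i : ℕ) < P0 := by
    apply Finset.filter_congr; intro i _
    rw [mkRow_val]; split_ifs <;> omega
  rw [h, card_filter_val_lt n P0 h0n]

lemma cnt_mkRow1 {P0 P1 P2 P3 : ℕ} (h01 : P0 ≤ P1) (h1n : P1 ≤ n) :
    cnt (mkRow P0 P1 P2 P3 : Fin n → Fin 5) 1 = P1 := by
  rw [cnt]
  have h : (Finset.univ.filter fun i : Fin n => (mkRow P0 P1 P2 P3 i : ℕ) ≤ 1) =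
      Finset.univ.filter fun i : Fin n => (i : ℕ) < P1 := by
    apply Finset.filter_congr; intro i _
    rw [mkRow_val]; split_ifs <;> omega
  rw [h, card_filter_val_lt n P1 h1n]

lemma cnt_mkRow2 {P0 P1 P2 P3 : ℕ} (h01 : P0 ≤ P1) (h12 : P1 ≤ P2) (h2n : P2 ≤ n) :
    cnt (mkRow P0 P1 P2 P3 : Fin n → Fin 5) 2 = P2 := by
  rw [cnt]
  have h : (Finset.univ.filter fun i : Fin n => (mkRow P0 P1 P2 P3 i : ℕ) ≤ 2) =
      Finset.univ.filter fun i : Fin n => (i : ℕ) < P2 := by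
    apply Finset.filter_congr; intro i _
    rw [mkRow_val]; split_ifs <;> omega
  rw [h, card_filter_val_lt n P2 h2n]

lemma cnt_mkRow3 {P0 P1 P2 P3 : ℕ} (h01 : P0 ≤ P1) (h12 : P1 ≤ P2) (h23 : P2 ≤ P3)
    (h3n : P3 ≤ n) :
    cnt (mkRow P0 P1 P2 P3 : Fin n → Fin 5) 3 = P3 := by
  rw [cnt]
  have h : (Finset.univ.filter fun i : Fin n => (mkRow P0 P1 P2 P3 i : ℕ) ≤ 3) =
      Finset.univ.filter fun i : Fin n => (i : ℕ) < P3 := by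
    apply Finset.filter_congr; intro i _
    rw [mkRow_val]; split_ifs <;> omega
  rw [h, card_filter_val_lt n P3 h3n]

/-- Abbreviation for the column-aligned index in row 1. -/
def cst (j : Fin m2) : Fin (m1 + m2) := Fin.castLE (Nat.le_add_left m2 m1) j

lemma cst_val (j : Fin m2) : ((Fin.castLE (Nat.le_add_left m2 m1) j : Fin (m1 + m2)) : ℕ) = (j : ℕ) := rfl

variable {m1 m2 : ℕ}

/-- The arithmetic constraint system characterizing cumulative count vectors
of KN tableaux. -/
def Conds (m1 m2 P0 P1 P2 P3 Q1 Q2 Q3 : ℕ) : Prop :=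
  P0 ≤ P1 ∧ P1 ≤ P2 ∧ P2 ≤ P3 ∧ P3 ≤ m1 + m2 ∧ P2 ≤ P1 + 1 ∧
  Q1 ≤ Q2 ∧ Q2 ≤ Q3 ∧ Q3 ≤ m2 ∧ Q2 ≤ Q1 + 1 ∧
  Q1 ≤ P0 ∧ Q3 ≤ P2 ∧
  (Q2 ≤ P1 ∨ (P2 = P1 + 1 ∧ Q1 = P1 ∧ Q2 = Q1 + 1)) ∧
  (Q3 = m2 ∨ P0 ≤ Q3) ∧ (Q3 = m2 ∨ m2 ≤ P3) ∧
  (P2 ≤ P0 ∨ Q3 ≤ max 1 Q2 ∨ Q3 ≤ P0 + 1 ∨ P2 + 1 ≤ max 1 Q2)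

section Forward

variable (T : KNTableau m1 m2)

lemma fQ0 : cnt T.row2 0 = 0 := by
  by_contra hc
  have h0 : 0 < cnt T.row2 0 := by omega
  have hm : 0 < m2 := lt_of_lt_of_le h0 (cnt_le _ _)
  have hg : (T.row2 ⟨0, hm⟩ : ℕ) ≤ 0 := (lt_cnt_iff T.mono2 ⟨0, hm⟩ 0).mpr h0
  rcases T.col ⟨0, hm⟩ with h | ⟨h1, h2⟩
  · omega
  · omega

lemma fk1 : cnt T.row2 1 ≤ cnt T.row1 0 := by
  by_contra hc
  push_neg at hc
  have hjm : cnt T.row1 0 < m2 := lt_of_lt_of_le hc (cnt_le _ _)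
  set j : Fin m2 := ⟨cnt T.row1 0, hjm⟩ with hj
  have hg : (T.row2 j : ℕ) ≤ 1 := (lt_cnt_iff T.mono2 j 1).mpr hc
  have hf := lt_cnt_iff T.mono1 (Fin.castLE (Nat.le_add_left m2 m1) j) 0
  have hv : ((Fin.castLE (Nat.le_add_left m2 m1) j : Fin (m1 + m2)) : ℕ) = cnt T.row1 0 := rfl
  rcases T.col j with h | ⟨h1, h2⟩
  · omega
  · omega

lemma fk2 : cnt T.row2 3 ≤ cnt T.row1 2 := by
  by_contra hc
  push_neg at hc
  have hjm : cnt T.row1 2 < m2 := lt_of_lt_of_le hc (cnt_le _ _)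
  set j : Fin m2 := ⟨cnt T.row1 2, hjm⟩ with hj
  have hg : (T.row2 j : ℕ) ≤ 3 := (lt_cnt_iff T.mono2 j 3).mpr hc
  have hf := lt_cnt_iff T.mono1 (Fin.castLE (Nat.le_add_left m2 m1) j) 2
  have hv : ((Fin.castLE (Nat.le_add_left m2 m1) j : Fin (m1 + m2)) : ℕ) = cnt T.row1 2 := rfl
  rcases T.col j with h | ⟨h1, h2⟩
  · omega
  · omega

lemma fP21 : cnt T.row1 2 ≤ cnt T.row1 1 + 1 := by
  have hcard : (Finset.univ.filter fun i => T.row1 i = 2).card ≤ 1 := by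
    rw [Finset.card_le_one]
    intro a ha b hb
    simp only [Finset.mem_filter, Finset.mem_univ, true_and] at ha hb
    by_contra hne
    rcases lt_or_gt_of_ne hne with h | h
    · exact T.zeroRow1 a b h ⟨ha, hb⟩
    · exact T.zeroRow1 b a h ⟨hb, ha⟩
  have h2 := card_eq2 T.row1
  omega

lemma fQ21 : cnt T.row2 2 ≤ cnt T.row2 1 + 1 := by
  have hcard : (Finset.univ.filter fun i => T.row2 i = 2).card ≤ 1 := by
    rw [Finset.card_le_one]
    intro a ha b hb
    simp only [Finset.mem_filter, Finset.mem_univ, true_and] at ha hb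
    by_contra hne
    rcases lt_or_gt_of_ne hne with h | h
    · exact T.zeroRow2 a b h ⟨ha, hb⟩
    · exact T.zeroRow2 b a h ⟨hb, ha⟩
  have h2 := card_eq2 T.row2
  omega

lemma fk3 : cnt T.row2 2 ≤ cnt T.row1 1 ∨
    (cnt T.row1 2 = cnt T.row1 1 + 1 ∧ cnt T.row2 1 = cnt T.row1 1 ∧
      cnt T.row2 2 = cnt T.row2 1 + 1) := by
  by_cases hQP : cnt T.row2 2 ≤ cnt T.row1 1
  · exact Or.inl hQP
  push_neg at hQP
  right
  have hjm : cnt T.row1 1 < m2 := lt_of_lt_of_le hQP (cnt_le _ _)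
  set j : Fin m2 := ⟨cnt T.row1 1, hjm⟩ with hj
  have hg : (T.row2 j : ℕ) ≤ 2 := (lt_cnt_iff T.mono2 j 2).mpr hQP
  have hf1 := lt_cnt_iff T.mono1 (Fin.castLE (Nat.le_add_left m2 m1) j) 1
  have hf2 := lt_cnt_iff T.mono1 (Fin.castLE (Nat.le_add_left m2 m1) j) 2
  have hv : ((Fin.castLE (Nat.le_add_left m2 m1) j : Fin (m1 + m2)) : ℕ) = cnt T.row1 1 := rfl
  have hg1 := lt_cnt_iff T.mono2 j 1
  have hjval : (j : ℕ) = cnt T.row1 1 := rfl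
  have key : (T.row1 (Fin.castLE (Nat.le_add_left m2 m1) j) : ℕ) = 2 ∧ (T.row2 j : ℕ) = 2 := by
    rcases T.col j with h | ⟨h1, h2⟩
    · omega
    · omega
  have hp : cnt T.row1 2 = cnt T.row1 1 + 1 := by
    have := fP21 T
    omega
  have hQ1 : cnt T.row2 1 = cnt T.row1 1 := by
    have hle : cnt T.row2 1 ≤ cnt T.row1 1 := by omega
    by_contra hne
    have hlt : cnt T.row2 1 < cnt T.row1 1 := by omega
    have hjm' : cnt T.row2 1 < m2 := by omega
    set j' : Fin m2 := ⟨cnt T.row2 1, hjm'⟩ with hj'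
    have hj'val : (j' : ℕ) = cnt T.row2 1 := rfl
    have hg1' := lt_cnt_iff T.mono2 j' 1
    have hg2' : (T.row2 j' : ℕ) ≤ 2 := (lt_cnt_iff T.mono2 j' 2).mpr (by omega)
    have h22 : T.row2 j' = 2 := by omega
    have hlt' : j' < j := by omega
    exact T.zeroRow2 j' j hlt' ⟨h22, by omega⟩
  refine ⟨hp, hQ1, ?_⟩
  have := fQ21 T
  omega

lemma fk4 : cnt T.row2 3 = m2 ∨ cnt T.row1 0 ≤ cnt T.row2 3 := by
  by_cases h : cnt T.row2 3 = m2
  · exact Or.inl h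
  right
  by_contra hc
  push_neg at hc
  have hjm : cnt T.row2 3 < m2 := lt_of_le_of_ne (cnt_le _ _) h
  set j : Fin m2 := ⟨cnt T.row2 3, hjm⟩ with hj
  have hg := lt_cnt_iff T.mono2 j 3
  have hjval : (j : ℕ) = cnt T.row2 3 := rfl
  have hf := lt_cnt_iff T.mono1 (Fin.castLE (Nat.le_add_left m2 m1) j) 0
  have hv : ((Fin.castLE (Nat.le_add_left m2 m1) j : Fin (m1 + m2)) : ℕ) = cnt T.row2 3 := rfl
  exact T.noOneOneBar j ⟨by omega, by omega⟩

lemma fk5 : cnt T.row2 3 = m2 ∨ m2 ≤ cnt T.row1 3 := by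
  by_cases h : cnt T.row2 3 = m2
  · exact Or.inl h
  right
  by_contra hc
  push_neg at hc
  have h3 : cnt T.row2 3 < m2 := lt_of_le_of_ne (cnt_le _ _) h
  have hk : max (cnt T.row2 3) (cnt T.row1 3) < m2 := by omega
  set j : Fin m2 := ⟨max (cnt T.row2 3) (cnt T.row1 3), hk⟩ with hj
  have hg := lt_cnt_iff T.mono2 j 3
  have hf := lt_cnt_iff T.mono1 (Fin.castLE (Nat.le_add_left m2 m1) j) 3
  have hjval : (j : ℕ) = max (cnt T.row2 3) (cnt T.row1 3) := rfl
  have hv : ((Fin.castLE (Nat.le_add_left m2 m1) j : Fin (m1 + m2)) : ℕ) =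
      max (cnt T.row2 3) (cnt T.row1 3) := rfl
  rcases T.col j with hcol | ⟨h1, h2⟩
  · omega
  · omega

lemma fk6 : cnt T.row1 2 ≤ cnt T.row1 0 ∨ cnt T.row2 3 ≤ max 1 (cnt T.row2 2) ∨
    cnt T.row2 3 ≤ cnt T.row1 0 + 1 ∨ cnt T.row1 2 + 1 ≤ max 1 (cnt T.row2 2) := by
  by_contra hc
  push_neg at hc
  obtain ⟨h1, h2, h3, h4⟩ := hc
  have htm : max (max 1 (cnt T.row2 2)) (cnt T.row1 0 + 1) < m2 := by
    have := cnt_le T.row2 3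
    omega
  have hjm : max (max 1 (cnt T.row2 2)) (cnt T.row1 0 + 1) - 1 < m2 := by omega
  set j : Fin m2 := ⟨max (max 1 (cnt T.row2 2)) (cnt T.row1 0 + 1) - 1, hjm⟩ with hj
  have hjval : (j : ℕ) = max (max 1 (cnt T.row2 2)) (cnt T.row1 0 + 1) - 1 := rfl
  have h' : (j : ℕ) + 1 < m2 := by omega
  have hg2 := lt_cnt_iff T.mono2 ⟨(j : ℕ) + 1, h'⟩ 2
  have hg3 := lt_cnt_iff T.mono2 ⟨(j : ℕ) + 1, h'⟩ 3
  have hg2v : ((⟨(j : ℕ) + 1, h'⟩ : Fin m2) : ℕ) = (j : ℕ) + 1 := rfl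
  have hf0 := lt_cnt_iff T.mono1 (Fin.castLE (Nat.le_add_left m2 m1) j) 0
  have hf2 := lt_cnt_iff T.mono1 (Fin.castLE (Nat.le_add_left m2 m1) j) 2
  have hv : ((Fin.castLE (Nat.le_add_left m2 m1) j : Fin (m1 + m2)) : ℕ) = (j : ℕ) := rfl
  rcases (show (T.row1 (Fin.castLE (Nat.le_add_left m2 m1) j) : ℕ) = 1 ∨ (T.row1 (Fin.castLE (Nat.le_add_left m2 m1) j) : ℕ) = 2 by omega) with hr | hr
  · exact T.forbidTwo j h' ⟨by omega, by omega⟩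
  · exact T.forbidZero j h' ⟨by omega, by omega⟩

lemma stat1 : T.b1 + cnt T.row2 1 + cnt T.row2 2 = 2 * m2 := by
  have h1 := card_ge3 T.row2
  have h2 := card_eq2 T.row2
  unfold KNTableau.b1
  omega

lemma stat2 : T.b2 + cnt T.row1 0 + cnt T.row2 3 = (m1 + m2) + m2 := by
  have h1 := card_pos' T.row1
  have h2 := card_gt3 T.row2
  unfold KNTableau.b2
  omega

lemma stat3 : T.b3 + cnt T.row1 1 + cnt T.row1 2 = 2 * (m1 + m2) := by
  have h1 := card_ge3 T.row1
  have h2 := card_eq2 T.row1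
  unfold KNTableau.b3
  omega

lemma stat4 : T.b4 + cnt T.row1 3 = m1 + m2 := by
  have h1 := card_gt3 T.row1
  unfold KNTableau.b4
  omega

lemma conds_of : Conds m1 m2 (cnt T.row1 0) (cnt T.row1 1) (cnt T.row1 2) (cnt T.row1 3)
    (cnt T.row2 1) (cnt T.row2 2) (cnt T.row2 3) := by
  refine ⟨cnt_mono _ (by omega), cnt_mono _ (by omega), cnt_mono _ (by omega),
    cnt_le _ _, fP21 T, cnt_mono _ (by omega), cnt_mono _ (by omega), cnt_le _ _,
    fQ21 T, fk1 T, fk2 T, fk3 T, fk4 T, fk5 T, fk6 T⟩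

end Forward

section Backward

lemma mkRow_cases {n : ℕ} (P0 P1 P2 P3 : ℕ) (i : Fin n) :
    ((i : ℕ) < P0 ∧ (mkRow P0 P1 P2 P3 i : ℕ) = 0) ∨
    (P0 ≤ (i : ℕ) ∧ (i : ℕ) < P1 ∧ (mkRow P0 P1 P2 P3 i : ℕ) = 1) ∨
    (P1 ≤ (i : ℕ) ∧ (i : ℕ) < P2 ∧ (mkRow P0 P1 P2 P3 i : ℕ) = 2) ∨
    (P2 ≤ (i : ℕ) ∧ (i : ℕ) < P3 ∧ (mkRow P0 P1 P2 P3 i : ℕ) = 3) ∨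
    (P3 ≤ (i : ℕ) ∧ (mkRow P0 P1 P2 P3 i : ℕ) = 4) := by
  rw [mkRow_val]
  split_ifs <;> omega

lemma exists_tableau {P0 P1 P2 P3 Q1 Q2 Q3 : ℕ}
    (h : Conds m1 m2 P0 P1 P2 P3 Q1 Q2 Q3) :
    ∃ T : KNTableau m1 m2,
      cnt T.row1 0 = P0 ∧ cnt T.row1 1 = P1 ∧ cnt T.row1 2 = P2 ∧ cnt T.row1 3 = P3 ∧
      cnt T.row2 1 = Q1 ∧ cnt T.row2 2 = Q2 ∧ cnt T.row2 3 = Q3 := by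
  obtain ⟨c1, c2, c3, c4, c5, c6, c7, c8, c9, c10, c11, c12, c13, c14, c15⟩ := h
  refine ⟨⟨mkRow P0 P1 P2 P3, mkRow 0 Q1 Q2 Q3,
    mkRow_mono c1 c2 c3, mkRow_mono (Nat.zero_le _) c6 c7, ?_, ?_, ?_, ?_, ?_, ?_⟩,
    cnt_mkRow0 (by omega), cnt_mkRow1 c1 (by omega), cnt_mkRow2 c1 c2 (by omega),
    cnt_mkRow3 c1 c2 c3 c4,
    ?_, ?_, ?_⟩
  · -- zeroRow1
    intro i j hij hcon
    obtain ⟨h1, h2⟩ := hcon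
    have ci := mkRow_cases P0 P1 P2 P3 i
    have cj := mkRow_cases P0 P1 P2 P3 j
    omega
  · -- zeroRow2
    intro i j hij hcon
    obtain ⟨h1, h2⟩ := hcon
    have ci := mkRow_cases 0 Q1 Q2 Q3 i
    have cj := mkRow_cases 0 Q1 Q2 Q3 j
    omega
  · -- col
    intro j
    have ci := mkRow_cases P0 P1 P2 P3 (Fin.castLE (Nat.le_add_left m2 m1) j)
    have cj := mkRow_cases 0 Q1 Q2 Q3 j
    have hv : ((Fin.castLE (Nat.le_add_left m2 m1) j : Fin (m1 + m2)) : ℕ) = (j : ℕ) := rfl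
    have hjlt : (j : ℕ) < m2 := j.2
    omega
  · -- noOneOneBar
    intro j hcon
    obtain ⟨h1, h2⟩ := hcon
    have ci := mkRow_cases P0 P1 P2 P3 (Fin.castLE (Nat.le_add_left m2 m1) j)
    have cj := mkRow_cases 0 Q1 Q2 Q3 j
    have hv : ((Fin.castLE (Nat.le_add_left m2 m1) j : Fin (m1 + m2)) : ℕ) = (j : ℕ) := rfl
    have hjlt : (j : ℕ) < m2 := j.2
    omega
  · -- forbidTwo
    intro j h' hcon
    obtain ⟨h1, h2⟩ := hcon
    have ci := mkRow_cases P0 P1 P2 P3 (Fin.castLE (Nat.le_add_left m2 m1) j)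
    have cj := mkRow_cases 0 Q1 Q2 Q3 (⟨(j : ℕ) + 1, h'⟩ : Fin m2)
    have hv : ((Fin.castLE (Nat.le_add_left m2 m1) j : Fin (m1 + m2)) : ℕ) = (j : ℕ) := rfl
    have hv2 : ((⟨(j : ℕ) + 1, h'⟩ : Fin m2) : ℕ) = (j : ℕ) + 1 := rfl
    omega
  · -- forbidZero
    intro j h' hcon
    obtain ⟨h1, h2⟩ := hcon
    have ci := mkRow_cases P0 P1 P2 P3 (Fin.castLE (Nat.le_add_left m2 m1) j)
    have cj := mkRow_cases 0 Q1 Q2 Q3 (⟨(j : ℕ) + 1, h'⟩ : Fin m2)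
    have hv : ((Fin.castLE (Nat.le_add_left m2 m1) j : Fin (m1 + m2)) : ℕ) = (j : ℕ) := rfl
    have hv2 : ((⟨(j : ℕ) + 1, h'⟩ : Fin m2) : ℕ) = (j : ℕ) + 1 := rfl
    omega
  · exact cnt_mkRow1 (Nat.zero_le _) (by omega)
  · exact cnt_mkRow2 (Nat.zero_le _) c6 (by omega)
  · exact cnt_mkRow3 (Nat.zero_le _) c6 c7 c8

end Backward

lemma uniq (m1 m2 P0 P1 P2 P3 Q1 Q2 Q3 P0' P1' P2' P3' Q1' Q2' Q3' : ℕ)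
    (h : Conds m1 m2 P0 P1 P2 P3 Q1 Q2 Q3) (h' : Conds m1 m2 P0' P1' P2' P3' Q1' Q2' Q3')
    (e1 : Q1 + Q2 = Q1' + Q2') (e2 : P0 + Q3 = P0' + Q3')
    (e3 : P1 + P2 = P1' + P2') (e4 : P3 = P3') :
    P0 = P0' ∧ P1 = P1' ∧ P2 = P2' ∧ P3 = P3' ∧ Q1 = Q1' ∧ Q2 = Q2' ∧ Q3 = Q3' := by
  unfold Conds at h h'
  omega

lemma mem_target (m1 m2 P0 P1 P2 P3 Q1 Q2 Q3 b1 b2 b3 b4 : ℕ)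
    (h : Conds m1 m2 P0 P1 P2 P3 Q1 Q2 Q3)
    (e1 : b1 + Q1 + Q2 = 2 * m2) (e2 : b2 + P0 + Q3 = m1 + m2 + m2)
    (e3 : b3 + P1 + P2 = 2 * (m1 + m2)) (e4 : b4 + P3 = m1 + m2) :
    b1 ≤ 2 * m2 ∧ b2 ≤ m1 + b1 ∧ b3 ≤ min (b2 + m1) (2 * b2) ∧ 2 * b4 ≤ b3 ∧ b4 ≤ m1 := by
  unfold Conds at h
  omega

set_option maxHeartbeats 1000000 in
lemma exists_counts (m1 m2 b1 b2 b3 b4 : ℕ)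
    (h : b1 ≤ 2 * m2 ∧ b2 ≤ m1 + b1 ∧ b3 ≤ min (b2 + m1) (2 * b2) ∧ 2 * b4 ≤ b3 ∧ b4 ≤ m1) :
    ∃ P0 P1 P2 P3 Q1 Q2 Q3, Conds m1 m2 P0 P1 P2 P3 Q1 Q2 Q3 ∧
      b1 + Q1 + Q2 = 2 * m2 ∧ b2 + P0 + Q3 = m1 + m2 + m2 ∧
      b3 + P1 + P2 = 2 * (m1 + m2) ∧ b4 + P3 = m1 + m2 := by
  obtain ⟨hb1, hb2, hb3, hb4, hb5⟩ := h
  obtain ⟨Q1, Q2, hQa, hQb, hQc⟩ :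
      ∃ q1 q2 : ℕ, q1 ≤ q2 ∧ q2 ≤ q1 + 1 ∧ b1 + q1 + q2 = 2 * m2 :=
    ⟨m2 - (b1 + 1) / 2, m2 - b1 / 2, by omega, by omega, by omega⟩
  obtain ⟨P1, P2, hPa, hPb, hPc⟩ :
      ∃ p1 p2 : ℕ, p1 ≤ p2 ∧ p2 ≤ p1 + 1 ∧ b3 + p1 + p2 = 2 * (m1 + m2) :=
    ⟨m1 + m2 - (b3 + 1) / 2, m1 + m2 - b3 / 2, by omega, by omega, by omega⟩
  obtain ⟨P3, hP3⟩ : ∃ p3, b4 + p3 = m1 + m2 := ⟨m1 + m2 - b4, by omega⟩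
  obtain ⟨S, hS⟩ : ∃ s, b2 + s = m1 + m2 + m2 := ⟨m1 + m2 + m2 - b2, by omega⟩
  obtain ⟨Q3, hQ3⟩ : ∃ q3,
      q3 = min m2 (min P2 (min (S - Q1) (max Q2 (max (S - P1) ((S + 1) / 2))))) := ⟨_, rfl⟩
  refine ⟨S - Q3, P1, P2, P3, Q1, Q2, Q3, ?_, by omega, by omega, by omega, by omega⟩
  unfold Conds
  omega

lemma cnt_ge4 {n : ℕ} (f : Fin n → Fin 5) (v : ℕ) (hv : 4 ≤ v) : cnt f v = n := by
  rw [cnt]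
  have h : (Finset.univ.filter fun i : Fin n => (f i : ℕ) ≤ v) = Finset.univ := by
    apply Finset.filter_true_of_mem
    intro i _
    have := (f i).2
    omega
  rw [h, Finset.card_univ, Fintype.card_fin]

lemma tableau_ext {m1 m2 : ℕ} (T T' : KNTableau m1 m2)
    (h1 : T.row1 = T'.row1) (h2 : T.row2 = T'.row2) : T = T' := by
  obtain ⟨r1, r2, _, _, _, _, _, _, _, _⟩ := T
  obtain ⟨r1', r2', _, _, _, _, _, _, _, _⟩ := T'
  simp only at h1 h2
  subst h1
  subst h2
  rfl

end KNAux

open KNTableau in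
/-- The statistics map is a bijection from KN tableaux of shape `(m1+m2, m2)` onto
the set of quadruples satisfying the Verma inequalities; in particular the number
of KN tableaux equals the number of such quadruples. -/
theorem knTableau_stats_bijection (m1 m2 : ℕ) :
    Set.BijOn (fun T : KNTableau m1 m2 => (b1 T, b2 T, b3 T, b4 T)) Set.univ
      {b : ℕ × ℕ × ℕ × ℕ |
        b.1 ≤ 2 * m2 ∧ b.2.1 ≤ m1 + b.1 ∧
        b.2.2.1 ≤ min (b.2.1 + m1) (2 * b.2.1) ∧
        2 * b.2.2.2 ≤ b.2.2.1 ∧ b.2.2.2 ≤ m1} ∧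
    Nat.card (KNTableau m1 m2) =
      Nat.card {b : ℕ × ℕ × ℕ × ℕ //
        b.1 ≤ 2 * m2 ∧ b.2.1 ≤ m1 + b.1 ∧
        b.2.2.1 ≤ min (b.2.1 + m1) (2 * b.2.1) ∧
        2 * b.2.2.2 ≤ b.2.2.1 ∧ b.2.2.2 ≤ m1} := by
  have hmain : Set.BijOn (fun T : KNTableau m1 m2 => (b1 T, b2 T, b3 T, b4 T)) Set.univ
      {b : ℕ × ℕ × ℕ × ℕ |
        b.1 ≤ 2 * m2 ∧ b.2.1 ≤ m1 + b.1 ∧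
        b.2.2.1 ≤ min (b.2.1 + m1) (2 * b.2.1) ∧
        2 * b.2.2.2 ≤ b.2.2.1 ∧ b.2.2.2 ≤ m1} := by
    refine ⟨?_, ?_, ?_⟩
    · intro T _
      simp only [Set.mem_setOf_eq]
      exact KNAux.mem_target m1 m2 _ _ _ _ _ _ _ _ _ _ _ (KNAux.conds_of T)
        (KNAux.stat1 T) (KNAux.stat2 T) (KNAux.stat3 T) (KNAux.stat4 T)
    · intro T _ T' _ h
      simp only [Prod.mk.injEq] at h
      obtain ⟨e1, e2, e3, e4⟩ := h
      obtain ⟨u0, u1, u2, u3, v1, v2, v3⟩ :=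
        KNAux.uniq m1 m2 _ _ _ _ _ _ _ _ _ _ _ _ _ _
          (KNAux.conds_of T) (KNAux.conds_of T')
          (by have := KNAux.stat1 T; have := KNAux.stat1 T'; omega)
          (by have := KNAux.stat2 T; have := KNAux.stat2 T'; omega)
          (by have := KNAux.stat3 T; have := KNAux.stat3 T'; omega)
          (by have := KNAux.stat4 T; have := KNAux.stat4 T'; omega)
      apply KNAux.tableau_ext
      · apply KNAux.mono_ext T.mono1 T'.mono1
        intro v
        match v with
        | 0 => exact u0
        | 1 => exact u1
        | 2 => exact u2
        | 3 => exact u3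
        | (v + 4) =>
          rw [KNAux.cnt_ge4 _ _ (by omega), KNAux.cnt_ge4 _ _ (by omega)]
      · apply KNAux.mono_ext T.mono2 T'.mono2
        intro v
        match v with
        | 0 => rw [KNAux.fQ0 T, KNAux.fQ0 T']
        | 1 => exact v1
        | 2 => exact v2
        | 3 => exact v3
        | (v + 4) =>
          rw [KNAux.cnt_ge4 _ _ (by omega), KNAux.cnt_ge4 _ _ (by omega)]
    · intro b hb
      obtain ⟨w, x, y, z⟩ := b
      simp only [Set.mem_setOf_eq] at hb
      obtain ⟨P0, P1, P2, P3, Q1, Q2, Q3, hC, e1, e2, e3, e4⟩ :=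
        KNAux.exists_counts m1 m2 w x y z hb
      obtain ⟨T, t0, t1, t2, t3, s1, s2, s3⟩ := KNAux.exists_tableau hC
      refine ⟨T, Set.mem_univ _, ?_⟩
      have h1 := KNAux.stat1 T
      have h2 := KNAux.stat2 T
      have h3 := KNAux.stat3 T
      have h4 := KNAux.stat4 T
      show (b1 T, b2 T, b3 T, b4 T) = (w, x, y, z)
      simp only [Prod.mk.injEq]
      refine ⟨by omega, by omega, by omega, by omega⟩
  refine ⟨hmain, ?_⟩
  have e1 : Nat.card (KNTableau m1 m2) = Nat.card (Set.univ : Set (KNTableau m1 m2)) :=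
    (Nat.card_congr (Equiv.Set.univ _)).symm
  have e2 : Nat.card (Set.univ : Set (KNTableau m1 m2)) =
      Nat.card {b : ℕ × ℕ × ℕ × ℕ |
        b.1 ≤ 2 * m2 ∧ b.2.1 ≤ m1 + b.1 ∧
        b.2.2.1 ≤ min (b.2.1 + m1) (2 * b.2.1) ∧
        2 * b.2.2.2 ≤ b.2.2.1 ∧ b.2.2.2 ≤ m1} :=
    Nat.card_congr (Set.BijOn.equiv _ hmain)
  exact e1.trans e2
end

section
/- For a KN tableau T of shape λ = (m1+m2,m2) with statistics (b1,b2,b3,b4), the weight wt(T) = Σ_i (k_i − k_{ī}) ε_i (where k_i, k_{ī} count occurrences of i and ī in T) satisfies wt(T) = (m1+m2−b2−b4) ε1 + (m2−b1+b2−b3+b4) ε2. -/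
namespace KNTableau

/-- The number of occurrences of the letter `a` in the tableau `T`. -/
def count {m1 m2 : ℕ} (T : KNTableau m1 m2) (a : Fin 5) : ℕ :=
  (Finset.univ.filter fun i => T.row1 i = a).card +
    (Finset.univ.filter fun j => T.row2 j = a).card

end KNTableau

open Finset

lemma card_filter_comp_eq_sum_card_fiber {ι α : Type*} [Fintype ι] [Fintype α] [DecidableEq α]
    (w : ι → α) (p : α → Prop) [DecidablePred p] :
    #{i | p (w i)} = ∑ a with p a, #{i | w i = a} := by
  simpa using (sum_card_fiberwise_eq_card_filter univ {a | p a} w).symm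

lemma card_eq_sum_card_fiber {ι α : Type*} [Fintype ι] [Fintype α] [DecidableEq α]
    (w : ι → α) : Fintype.card ι = ∑ a, #{i | w i = a} :=
  card_eq_sum_card_fiberwise (by simp)

namespace KNTableau

variable {m1 m2 : ℕ} (T : KNTableau m1 m2)

lemma row2_ne_zero (j : Fin m2) : T.row2 j ≠ 0 := by
  rcases T.col j with h | ⟨-, h⟩
  · exact ((Fin.zero_le _).trans_lt h).ne'
  · rw [h]; decide

end KNTableau

open KNTableau in
/-- The weight `wt(T) = (k1 − k_{1̄}) ε1 + (k2 − k_{2̄}) ε2` of a KN tableau `T`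
of shape `(m1+m2, m2)`, written as a pair of `ε1`- and `ε2`-coordinates, equals
`(m1+m2−b2−b4, m2−b1+b2−b3+b4)`. (Letters: `0 = 1`, `1 = 2`, `3 = 2̄`, `4 = 1̄`.) -/
theorem knTableau_weight (m1 m2 : ℕ) (T : KNTableau m1 m2) :
    ((count T 0 : ℤ) - count T 4, (count T 1 : ℤ) - count T 3)
      = ((m1 + m2 : ℤ) - b2 T - b4 T,
         (m2 : ℤ) - b1 T + b2 T - b3 T + b4 T) := by
  have row1_length := card_eq_sum_card_fiber T.row1
  have row2_length := card_eq_sum_card_fiber T.row2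
  have row2_zero : #{j | T.row2 j = 0} = 0 := by simpa using T.row2_ne_zero
  simp only [count, b1, b2, b3, b4, card_filter_comp_eq_sum_card_fiber T.row1 (0 < ·),
    card_filter_comp_eq_sum_card_fiber T.row1 (3 ≤ ·),
    card_filter_comp_eq_sum_card_fiber T.row1 (3 < ·),
    card_filter_comp_eq_sum_card_fiber T.row2 (3 < ·),
    card_filter_comp_eq_sum_card_fiber T.row2 (3 ≤ ·)]
  simp only [Fintype.card_fin, sum_filter, Fin.sum_univ_five, Fin.reduceLT, Fin.reduceLE,
    ↓reduceIte, Prod.mk.injEq] at row1_length row2_length ⊢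
  omega
end
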